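/- arXiv:math/9611214 — 3 statements merged into one kernel-verified Lean document; each statement's English description precedes it below -/
import Mathlib

section
/- Let L be a Moufang loop of class at most 2. Then for all c, d, e ∈ L and every integer k: ((c^k d)c)e = (c^k(d(ce)))·[c,d,e]^(k−1). Consequently, L satisfies the M_k-law c^k(d(ce)) = ((c^k d)c)e identically if and only if [c,d,e]^(k−1) = 1 for all c, d, e ∈ L; equivalently, if n is the exponent of the subloop generated by all associators, L satisfies the M_k-law exactly for those integers k with k ≡ 1 (mod n). -/
/-- An inverse property loop: a set with multiplication, identity, and two-sided
inverses satisfying `a⁻¹(ax) = x = (xa)a⁻¹`. -/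
class IPLoop (L : Type*) extends Mul L, One L, Inv L where
  one_mul : ∀ a : L, 1 * a = a
  mul_one : ∀ a : L, a * 1 = a
  inv_mul_cancel_left : ∀ a x : L, a⁻¹ * (a * x) = x
  mul_inv_cancel_right : ∀ a x : L, (x * a) * a⁻¹ = x

namespace IPLoop

variable {L : Type*} [IPLoop L]

/-- Powers with natural number exponent, `c^(n+1) = c * c^n`. -/
def npow (c : L) : ℕ → L
  | 0 => 1
  | n + 1 => c * npow c n

instance : Pow L ℕ := ⟨npow⟩

/-- Powers with integer exponent. -/
def zpow (c : L) : ℤ → L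
  | Int.ofNat n => c ^ n
  | Int.negSucc n => (c ^ (n + 1))⁻¹

instance : Pow L ℤ := ⟨zpow⟩

/-- The commutator `[c,d] = (dc)⁻¹(cd)`. -/
def comm (c d : L) : L := (d * c)⁻¹ * (c * d)

/-- The associator `[c,d,e] = (c(de))⁻¹((cd)e)`. -/
def assoc (c d e : L) : L := (c * (d * e))⁻¹ * ((c * d) * e)

/-- Membership in the center `Z(L)`. -/
def inCenter (z : L) : Prop :=
  (∀ x : L, comm z x = 1) ∧
  ∀ x y : L, assoc z x y = 1 ∧ assoc x z y = 1 ∧ assoc x y z = 1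

/-- The Moufang identity `((dc)e)c = d(c(ec))`. -/
def IsMoufang (L : Type*) [IPLoop L] : Prop :=
  ∀ c d e : L, ((d * c) * e) * c = d * (c * (e * c))

/-- A loop is of (central nilpotence) class at most 2 if every commutator and
every associator lies in the center. -/
def ClassTwo (L : Type*) [IPLoop L] : Prop :=
  (∀ c d : L, inCenter (comm c d)) ∧ ∀ c d e : L, inCenter (assoc c d e)

/-- The order of an element: least `n > 0` with `c^n = 1` (or `0` if none). -/
noncomputable def ordOf (c : L) : ℕ := sInf {n : ℕ | 0 < n ∧ c ^ n = 1}

/-- The subloop generated by a subset `S`. -/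
def subloopClosure (S : Set L) : Set L :=
  ⋂₀ {T : Set L | (1 : L) ∈ T ∧ (∀ x ∈ T, x⁻¹ ∈ T) ∧
      (∀ x ∈ T, ∀ y ∈ T, x * y ∈ T) ∧ S ⊆ T}

end IPLoop

namespace IPLoop

variable {L : Type*} [IPLoop L]

/-! ### Basic inverse-property loop facts -/

theorem mul_left_cancel' {a x y : L} (h : a * x = a * y) : x = y := by
  have h2 := congrArg (fun t => a⁻¹ * t) h
  simpa only [inv_mul_cancel_left] using h2

theorem mul_right_cancel' {a x y : L} (h : x * a = y * a) : x = y := by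
  have h2 := congrArg (fun t => t * a⁻¹) h
  simpa only [mul_inv_cancel_right] using h2

theorem mul_inv_cancel' (a : L) : a * a⁻¹ = 1 := by
  have h := mul_inv_cancel_right a (1 : L)
  rwa [one_mul] at h

theorem inv_mul_cancel' (a : L) : a⁻¹ * a = 1 := by
  have h := inv_mul_cancel_left a (1 : L)
  rwa [mul_one] at h

theorem inv_inv' (a : L) : a⁻¹⁻¹ = a := by
  have h := inv_mul_cancel_left a⁻¹ a
  rwa [inv_mul_cancel', mul_one] at h

theorem mul_inv_cancel_left'' (a x : L) : a * (a⁻¹ * x) = x := by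
  have h := inv_mul_cancel_left a⁻¹ x
  rwa [inv_inv'] at h

theorem inv_mul_cancel_right'' (x a : L) : (x * a⁻¹) * a = x := by
  have h := mul_inv_cancel_right a⁻¹ x
  rwa [inv_inv'] at h

theorem eq_one_of_self_mul {a s : L} (h : a * s = a) : s = 1 := by
  apply mul_left_cancel' (a := a)
  rw [h, mul_one]

theorem eq_inv_of_mul_eq_one {a b : L} (h : a * b = 1) : b = a⁻¹ := by
  have h2 := congrArg (fun t => a⁻¹ * t) h
  simp only [inv_mul_cancel_left, mul_one] at h2
  exact h2

theorem inv_eq_of_mul_eq_one {a b : L} (h : a * b = 1) : a = b⁻¹ := by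
  have hb := eq_inv_of_mul_eq_one h
  rw [hb, inv_inv']

theorem mul_inv_rev' (a b : L) : (a * b)⁻¹ = b⁻¹ * a⁻¹ := by
  have h1 : b * (a * b)⁻¹ = a⁻¹ := by
    calc b * (a * b)⁻¹ = (a⁻¹ * (a * b)) * (a * b)⁻¹ := by rw [inv_mul_cancel_left]
      _ = a⁻¹ := mul_inv_cancel_right _ _
  calc (a * b)⁻¹ = b⁻¹ * (b * (a * b)⁻¹) := (inv_mul_cancel_left b _).symm
    _ = b⁻¹ * a⁻¹ := by rw [h1]

/-! ### Powers -/

theorem pow_zero' (c : L) : c ^ (0 : ℕ) = 1 := rfl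

theorem pow_succ' (c : L) (n : ℕ) : c ^ (n + 1) = c * c ^ n := rfl

theorem zpow_zero' (c : L) : c ^ (0 : ℤ) = 1 := rfl

theorem zpow_negSucc' (c : L) (n : ℕ) : c ^ (Int.negSucc n) = (c ^ (n + 1))⁻¹ := rfl

theorem zpow_ofNat' (c : L) (n : ℕ) : c ^ ((n : ℕ) : ℤ) = c ^ n := rfl

/-! ### Centrality -/

structure IsCentral (s : L) : Prop where
  comm' : ∀ x : L, s * x = x * s
  ml : ∀ x y : L, s * (x * y) = (s * x) * y
  mm : ∀ x y : L, (x * s) * y = x * (s * y)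
  mr : ∀ x y : L, (x * y) * s = x * (y * s)

theorem commutes_of_comm_eq_one {a b : L} (h : comm a b = 1) : a * b = b * a := by
  have h1 : (b * a) * ((b * a)⁻¹ * (a * b)) = (b * a) * 1 := by
    rw [show (b * a)⁻¹ * (a * b) = comm a b from rfl, h]
  rwa [mul_inv_cancel_left'', mul_one] at h1

theorem assoc_eq_of_assoc_eq_one {a b c : L} (h : assoc a b c = 1) :
    (a * b) * c = a * (b * c) := by
  have h1 : (a * (b * c)) * ((a * (b * c))⁻¹ * ((a * b) * c)) = (a * (b * c)) * 1 := by
    rw [show (a * (b * c))⁻¹ * ((a * b) * c) = assoc a b c from rfl, h]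
  rw [mul_inv_cancel_left'', mul_one] at h1
  exact h1

theorem isCentral_of_inCenter {s : L} (h : inCenter s) : IsCentral s where
  comm' x := commutes_of_comm_eq_one (h.1 x)
  ml x y := (assoc_eq_of_assoc_eq_one ((h.2 x y).1)).symm
  mm x y := assoc_eq_of_assoc_eq_one ((h.2 x y).2.1)
  mr x y := assoc_eq_of_assoc_eq_one ((h.2 x y).2.2)

theorem central_assoc (h2 : ClassTwo L) (x y z : L) : IsCentral (assoc x y z) :=
  isCentral_of_inCenter (h2.2 x y z)

theorem central_comm (h2 : ClassTwo L) (x y : L) : IsCentral (comm x y) :=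
  isCentral_of_inCenter (h2.1 x y)

theorem IsCentral.slide_left {s : L} (hs : IsCentral s) (x y : L) :
    (x * s) * y = (x * y) * s := by
  rw [hs.mm, hs.comm', ← hs.mr]

theorem IsCentral.inv_comm {s : L} (hs : IsCentral s) (x : L) : s⁻¹ * x = x * s⁻¹ := by
  apply mul_left_cancel' (a := s)
  rw [mul_inv_cancel_left'', hs.ml, hs.comm' x, mul_inv_cancel_right]

/-! ### Associator expansion -/

theorem mul_assoc_eq (x y z : L) : (x * y) * z = (x * (y * z)) * assoc x y z := by
  rw [show assoc x y z = (x * (y * z))⁻¹ * ((x * y) * z) from rfl, mul_inv_cancel_left'']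

theorem mul_comm_eq (x y : L) : x * y = (y * x) * comm x y := by
  rw [show comm x y = (y * x)⁻¹ * (x * y) from rfl, mul_inv_cancel_left'']

theorem assoc_unique {x y z t : L} (h : (x * (y * z)) * t = (x * y) * z) :
    t = assoc x y z := by
  apply mul_left_cancel' (a := x * (y * z))
  rw [h]
  exact mul_assoc_eq x y z

theorem assoc_one_left (y z : L) : assoc 1 y z = 1 := by
  show ((1 : L) * (y * z))⁻¹ * (((1 : L) * y) * z) = 1
  rw [one_mul, one_mul, inv_mul_cancel']

theorem assoc_one_mid (x z : L) : assoc x 1 z = 1 := by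
  show (x * ((1 : L) * z))⁻¹ * ((x * 1) * z) = 1
  rw [one_mul, mul_one, inv_mul_cancel']

theorem assoc_one_right (x y : L) : assoc x y 1 = 1 := by
  show (x * (y * 1))⁻¹ * ((x * y) * 1) = 1
  rw [mul_one, mul_one, inv_mul_cancel']

theorem assoc_inv_left (a y : L) : assoc a⁻¹ a y = 1 := by
  show (a⁻¹ * (a * y))⁻¹ * ((a⁻¹ * a) * y) = 1
  rw [inv_mul_cancel_left, inv_mul_cancel', one_mul, inv_mul_cancel']

theorem assoc_inv_left' (a y : L) : assoc a a⁻¹ y = 1 := by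
  show (a * (a⁻¹ * y))⁻¹ * ((a * a⁻¹) * y) = 1
  rw [mul_inv_cancel_left'', mul_inv_cancel', one_mul, inv_mul_cancel']

theorem assoc_inv_right (x a : L) : assoc x a a⁻¹ = 1 := by
  show (x * (a * a⁻¹))⁻¹ * ((x * a) * a⁻¹) = 1
  rw [mul_inv_cancel', mul_one, mul_inv_cancel_right, inv_mul_cancel']

theorem assoc_inv_right' (x a : L) : assoc x a⁻¹ a = 1 := by
  show (x * (a⁻¹ * a))⁻¹ * ((x * a⁻¹) * a) = 1
  rw [inv_mul_cancel', mul_one, inv_mul_cancel_right'', inv_mul_cancel']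

end IPLoop
namespace IPLoop

variable {L : Type*} [IPLoop L]

/-! ### Moufang consequences -/

theorem right_alt (hM : IsMoufang L) (d c : L) : (d * c) * c = d * (c * c) := by
  have h := hM c d 1
  rwa [mul_one, one_mul] at h

theorem flex (hM : IsMoufang L) (c e : L) : (c * e) * c = c * (e * c) := by
  have h := hM c 1 e
  rwa [one_mul, one_mul] at h

theorem left_alt (hM : IsMoufang L) (a b : L) : a * (a * b) = (a * a) * b := by
  have h := right_alt hM b⁻¹ a⁻¹
  have h2 := congrArg (fun t => t⁻¹) h
  simp only [mul_inv_rev', inv_inv'] at h2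
  exact h2

theorem assoc_self_left (hM : IsMoufang L) (a b : L) : assoc a a b = 1 := by
  show (a * (a * b))⁻¹ * ((a * a) * b) = 1
  rw [← left_alt hM, inv_mul_cancel']

theorem assoc_self_right (hM : IsMoufang L) (d c : L) : assoc d c c = 1 := by
  show (d * (c * c))⁻¹ * ((d * c) * c) = 1
  rw [right_alt hM, inv_mul_cancel']

theorem assoc_flex (hM : IsMoufang L) (c e : L) : assoc c e c = 1 := by
  show (c * (e * c))⁻¹ * ((c * e) * c) = 1
  rw [flex hM, inv_mul_cancel']

theorem left_moufang (hM : IsMoufang L) (a b f : L) :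
    ((a * b) * a) * f = a * (b * (a * f)) := by
  have h := hM a⁻¹ f⁻¹ b⁻¹
  have h2 := congrArg (fun t => t⁻¹) h
  simp only [mul_inv_rev', inv_inv'] at h2
  exact h2.symm

/-! ### Central-slot invariance of the associator -/

theorem assoc_central_left {s : L} (hs : IsCentral s) (x y z : L) :
    assoc (x * s) y z = assoc x y z := by
  have hL : ((x * s) * (y * z)) * assoc x y z = ((x * y) * z) * s := by
    rw [hs.slide_left, hs.mm, hs.comm', ← hs.mr, ← mul_assoc_eq]
  have hR : ((x * s) * y) * z = ((x * y) * z) * s := by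
    rw [hs.slide_left, hs.slide_left]
  exact (assoc_unique (hL.trans hR.symm)).symm

theorem assoc_central_mid {s : L} (hs : IsCentral s) (x y z : L) :
    assoc x (y * s) z = assoc x y z := by
  have hL : (x * ((y * s) * z)) * assoc x y z = ((x * y) * z) * s := by
    rw [hs.slide_left, ← hs.mr, hs.mm, hs.comm', ← hs.mr, ← mul_assoc_eq]
  have hR : (x * (y * s)) * z = ((x * y) * z) * s := by
    rw [← hs.mr, hs.slide_left]
  exact (assoc_unique (hL.trans hR.symm)).symm

theorem assoc_central_right {s : L} (hs : IsCentral s) (x y z : L) :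
    assoc x y (z * s) = assoc x y z := by
  have hL : (x * (y * (z * s))) * assoc x y z = ((x * y) * z) * s := by
    rw [← hs.mr, ← hs.mr, hs.mm, hs.comm', ← hs.mr, ← mul_assoc_eq]
  have hR : (x * y) * (z * s) = ((x * y) * z) * s := by
    rw [← hs.mr]
  exact (assoc_unique (hL.trans hR.symm)).symm

theorem assoc_swap_left (h2 : ClassTwo L) (a b y z : L) :
    assoc (a * b) y z = assoc (b * a) y z := by
  rw [mul_comm_eq a b, assoc_central_left (central_comm h2 a b)]

theorem assoc_swap_mid (h2 : ClassTwo L) (x a b z : L) :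
    assoc x (a * b) z = assoc x (b * a) z := by
  rw [mul_comm_eq a b, assoc_central_mid (central_comm h2 a b)]

theorem assoc_swap_right (h2 : ClassTwo L) (x y a b : L) :
    assoc x y (a * b) = assoc x y (b * a) := by
  rw [mul_comm_eq a b, assoc_central_right (central_comm h2 a b)]

/-! ### The two Moufang associator relations and the pentagon -/

theorem relC (hM : IsMoufang L) (h2 : ClassTwo L) (b a f : L) :
    assoc b a f * assoc a (b * a) f = 1 := by
  have hc1 := central_assoc h2 b a f
  have h := left_moufang hM a b f
  rw [flex hM a b, mul_assoc_eq a (b * a) f, mul_assoc_eq b a f,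
      ← hc1.mr, hc1.mm] at h
  exact eq_one_of_self_mul h

theorem relD (hM : IsMoufang L) (h2 : ClassTwo L) (d c e : L) :
    assoc d (c * e) c * assoc d c e = 1 := by
  have hc1 := central_assoc h2 d c e
  have hc2 := central_assoc h2 d (c * e) c
  have h := hM c d e
  rw [mul_assoc_eq d c e, hc1.slide_left, mul_assoc_eq d (c * e) c, flex hM c e,
      hc2.mm] at h
  exact eq_one_of_self_mul h

theorem pentagon (h2 : ClassTwo L) (x y z w : L) :
    assoc x y (z * w) * assoc (x * y) z w
      = (assoc y z w * assoc x (y * z) w) * assoc x y z := by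
  have c1 := central_assoc h2 x y (z * w)
  have c2 := central_assoc h2 y z w
  have c3 := central_assoc h2 x (y * z) w
  have c4 := central_assoc h2 x y z
  have path2 : ((x * y) * z) * w
      = (x * (y * (z * w))) * (assoc x y (z * w) * assoc (x * y) z w) := by
    rw [mul_assoc_eq (x * y) z w, mul_assoc_eq x y (z * w), c1.mm]
  have path1 : ((x * y) * z) * w
      = (x * (y * (z * w))) * ((assoc y z w * assoc x (y * z) w) * assoc x y z) := by
    rw [mul_assoc_eq x y z, c4.slide_left, mul_assoc_eq x (y * z) w,
        mul_assoc_eq y z w, ← c2.mr, c2.mm, c4.mr]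
  exact mul_left_cancel' (path2.symm.trans path1)

end IPLoop
namespace IPLoop

variable {L : Type*} [IPLoop L]

/-! ### Skew-symmetry and sliding invariances -/

theorem relF (h2 : ClassTwo L) (u z w : L) :
    assoc u⁻¹ (u * z) w = (assoc u z w)⁻¹ := by
  have h := pentagon h2 u⁻¹ u z w
  rw [assoc_inv_left, inv_mul_cancel', assoc_one_left, assoc_inv_left,
      one_mul, mul_one] at h
  exact eq_inv_of_mul_eq_one h.symm

theorem inv1 (hM : IsMoufang L) (h2 : ClassTwo L) (x y z : L) :
    assoc (x * y⁻¹) y z = assoc x y z := by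
  have h1 : assoc x ((y * x⁻¹) * x) z = (assoc (y * x⁻¹) x z)⁻¹ :=
    eq_inv_of_mul_eq_one (relC hM h2 (y * x⁻¹) x z)
  rw [inv_mul_cancel_right''] at h1
  have h2' := relF h2 (x * y⁻¹) y z
  rw [mul_inv_rev', inv_inv', inv_mul_cancel_right''] at h2'
  rw [h2', inv_inv'] at h1
  exact h1.symm

theorem inv1' (hM : IsMoufang L) (h2 : ClassTwo L) (u y z : L) :
    assoc (u * y) y z = assoc u y z := by
  have h := inv1 hM h2 (u * y) y z
  rw [mul_inv_cancel_right] at h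
  exact h.symm

theorem skew12 (hM : IsMoufang L) (h2 : ClassTwo L) (x y z : L) :
    assoc y x z = (assoc x y z)⁻¹ := by
  have h1 : assoc x ((y * x⁻¹) * x) z = (assoc (y * x⁻¹) x z)⁻¹ :=
    eq_inv_of_mul_eq_one (relC hM h2 (y * x⁻¹) x z)
  rw [inv_mul_cancel_right'', inv1 hM h2 y x z] at h1
  rw [h1, inv_inv']

theorem relJ (h2 : ClassTwo L) (x y z : L) : assoc z⁻¹ y⁻¹ x⁻¹ = assoc x y z := by
  have hc := central_assoc h2 x y z
  have hc' := central_assoc h2 z⁻¹ y⁻¹ x⁻¹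
  have h := congrArg (fun t => t⁻¹) (mul_assoc_eq x y z)
  simp only [mul_inv_rev'] at h
  rw [mul_assoc_eq z⁻¹ y⁻¹ x⁻¹, hc.inv_comm, hc'.mm] at h
  have h1 := eq_one_of_self_mul h.symm
  have h2' := inv_eq_of_mul_eq_one h1
  rwa [inv_inv'] at h2'

theorem inv3 (hM : IsMoufang L) (h2 : ClassTwo L) (x y z : L) :
    assoc x y (z * y) = assoc x y z := by
  calc assoc x y (z * y) = assoc (z * y)⁻¹ y⁻¹ x⁻¹ := (relJ h2 x y (z * y)).symm
    _ = assoc (y⁻¹ * z⁻¹) y⁻¹ x⁻¹ := by rw [mul_inv_rev']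
    _ = assoc (z⁻¹ * y⁻¹) y⁻¹ x⁻¹ := assoc_swap_left h2 y⁻¹ z⁻¹ y⁻¹ x⁻¹
    _ = assoc z⁻¹ y⁻¹ x⁻¹ := inv1' hM h2 z⁻¹ y⁻¹ x⁻¹
    _ = assoc x y z := relJ h2 x y z

theorem inv3' (hM : IsMoufang L) (h2 : ClassTwo L) (x y z : L) :
    assoc x y (z * y⁻¹) = assoc x y z := by
  have h := inv3 hM h2 x y (z * y⁻¹)
  rw [inv_mul_cancel_right''] at h
  exact h.symm

theorem skew23 (hM : IsMoufang L) (h2 : ClassTwo L) (x y z : L) :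
    assoc x z y = (assoc x y z)⁻¹ := by
  have h := relD hM h2 x z (z⁻¹ * y)
  rw [mul_inv_cancel_left''] at h
  have h1 := eq_inv_of_mul_eq_one h
  rwa [assoc_swap_right h2 x z z⁻¹ y, inv3' hM h2 x z y] at h1

theorem cyc (hM : IsMoufang L) (h2 : ClassTwo L) (x y z : L) :
    assoc y z x = assoc x y z := by
  rw [skew23 hM h2 y x z, skew12 hM h2 x y z, inv_inv']

theorem slot2_slide (hM : IsMoufang L) (h2 : ClassTwo L) (c x w : L) :
    assoc c (x * c) w = assoc c x w := by
  have h := eq_inv_of_mul_eq_one (relC hM h2 x c w)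
  rw [h, skew12 hM h2 c x w, inv_inv']

theorem slot2_slide_inv (hM : IsMoufang L) (h2 : ClassTwo L) (c x w : L) :
    assoc c (x * c⁻¹) w = assoc c x w := by
  have h := slot2_slide hM h2 c (x * c⁻¹) w
  rw [inv_mul_cancel_right''] at h
  exact h.symm

theorem slot2_slide_c (hM : IsMoufang L) (h2 : ClassTwo L) (c x w : L) :
    assoc c⁻¹ (x * c) w = assoc c⁻¹ x w := by
  have h := slot2_slide_inv hM h2 c⁻¹ x w
  rwa [inv_inv'] at h

theorem slot3_slide (hM : IsMoufang L) (h2 : ClassTwo L) (c d e : L) :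
    assoc c d (e * c) = assoc c d e := by
  rw [skew23 hM h2 c (e * c) d, slot2_slide hM h2 c e d, ← skew23 hM h2 c e d]

theorem slot3_absorb (hM : IsMoufang L) (h2 : ClassTwo L) (c d e : L) :
    assoc c d (c * e) = assoc c d e := by
  rw [assoc_swap_right h2 c d c e, slot3_slide hM h2 c d e]

theorem hom_neg (hM : IsMoufang L) (h2 : ClassTwo L) (c z w : L) :
    assoc c⁻¹ z w = (assoc c z w)⁻¹ := by
  have h := pentagon h2 c c⁻¹ z w
  rw [assoc_inv_left', mul_inv_cancel', assoc_one_left, assoc_inv_left',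
      one_mul, mul_one, assoc_swap_mid h2 c c⁻¹ z w,
      slot2_slide_inv hM h2 c z w] at h
  exact inv_eq_of_mul_eq_one h.symm

end IPLoop
namespace IPLoop

variable {L : Type*} [IPLoop L]

/-! ### Integer power arithmetic -/

theorem pow_mul_comm' (hM : IsMoufang L) (c : L) (n : ℕ) : c * c ^ n = c ^ n * c := by
  induction n with
  | zero => rw [pow_zero', one_mul, mul_one]
  | succ n ih => rw [pow_succ', flex hM c (c ^ n), ih]

theorem zpow_succ' (hM : IsMoufang L) (c : L) (k : ℤ) : c ^ (k + 1) = c * c ^ k := by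
  cases k with
  | ofNat n => rfl
  | negSucc n =>
    cases n with
    | zero =>
      have h : Int.negSucc 0 + 1 = 0 := by decide
      rw [h, zpow_zero', zpow_negSucc', pow_succ', pow_zero', mul_one, mul_inv_cancel']
    | succ m =>
      have h : Int.negSucc (m + 1) + 1 = Int.negSucc m := by
        rw [Int.negSucc_eq, Int.negSucc_eq]; omega
      rw [h, zpow_negSucc', zpow_negSucc', pow_succ' c (m + 1),
          pow_mul_comm' hM c (m + 1), mul_inv_rev', mul_inv_cancel_left'']

theorem zpow_pred' (hM : IsMoufang L) (c : L) (k : ℤ) : c ^ (k - 1) = c⁻¹ * c ^ k := by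
  have h := zpow_succ' hM c (k - 1)
  have he : k - 1 + 1 = k := by omega
  rw [he] at h
  rw [h, inv_mul_cancel_left]

theorem zpow_mul_comm' (hM : IsMoufang L) (c : L) (k : ℤ) : c * c ^ k = c ^ k * c := by
  cases k with
  | ofNat n => exact pow_mul_comm' hM c n
  | negSucc n =>
    rw [zpow_negSucc']
    have h1 : c * (c ^ (n + 1))⁻¹ = (c ^ n)⁻¹ := by
      rw [pow_succ', pow_mul_comm' hM c n, mul_inv_rev', mul_inv_cancel_left'']
    have h2 : (c ^ (n + 1))⁻¹ * c = (c ^ n)⁻¹ := by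
      rw [pow_succ', mul_inv_rev', inv_mul_cancel_right'']
    rw [h1, h2]

theorem zpow_inv_comm' (hM : IsMoufang L) (c : L) (k : ℤ) :
    c⁻¹ * c ^ k = c ^ k * c⁻¹ := by
  cases k with
  | ofNat n =>
    show c⁻¹ * c ^ n = c ^ n * c⁻¹
    cases n with
    | zero => rw [pow_zero', mul_one, one_mul]
    | succ m =>
      rw [pow_succ', inv_mul_cancel_left, pow_mul_comm' hM, mul_inv_cancel_right]
  | negSucc n =>
    rw [zpow_negSucc', ← mul_inv_rev', ← mul_inv_rev', pow_mul_comm' hM]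

theorem zpow_mul_self (hM : IsMoufang L) (c : L) (k : ℤ) : c ^ k * c = c ^ (k + 1) := by
  rw [zpow_succ' hM, zpow_mul_comm' hM]

theorem zpow_mul_inv_self (hM : IsMoufang L) (c : L) (k : ℤ) :
    c ^ k * c⁻¹ = c ^ (k - 1) := by
  rw [zpow_pred' hM, zpow_inv_comm' hM]

/-! ### Iterated sliding and homogeneity -/

theorem invk1 (hM : IsMoufang L) (h2 : ClassTwo L) (c d e : L) (k : ℤ) :
    assoc (c ^ k * d) c e = assoc d c e := by
  induction k using Int.induction_on with
  | zero => rw [zpow_zero', one_mul]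
  | succ n ih =>
    rw [zpow_succ' hM, mul_assoc_eq c (c ^ (n : ℤ)) d,
        assoc_central_left (central_assoc h2 c (c ^ (n : ℤ)) d),
        mul_comm_eq c (c ^ (n : ℤ) * d),
        assoc_central_left (central_comm h2 c (c ^ (n : ℤ) * d)),
        inv1' hM h2, ih]
  | pred n ih =>
    rw [zpow_pred' hM, mul_assoc_eq c⁻¹ (c ^ (-(n : ℤ))) d,
        assoc_central_left (central_assoc h2 c⁻¹ (c ^ (-(n : ℤ))) d),
        mul_comm_eq c⁻¹ (c ^ (-(n : ℤ)) * d),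
        assoc_central_left (central_comm h2 c⁻¹ (c ^ (-(n : ℤ)) * d)),
        inv1 hM h2, ih]

theorem invk2 (hM : IsMoufang L) (h2 : ClassTwo L) (c z w : L) (k : ℤ) :
    assoc c (c ^ k * z) w = assoc c z w := by
  induction k using Int.induction_on with
  | zero => rw [zpow_zero', one_mul]
  | succ n ih =>
    rw [zpow_succ' hM, mul_assoc_eq c (c ^ (n : ℤ)) z,
        assoc_central_mid (central_assoc h2 c (c ^ (n : ℤ)) z),
        mul_comm_eq c (c ^ (n : ℤ) * z),
        assoc_central_mid (central_comm h2 c (c ^ (n : ℤ) * z)),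
        slot2_slide hM h2, ih]
  | pred n ih =>
    rw [zpow_pred' hM, mul_assoc_eq c⁻¹ (c ^ (-(n : ℤ))) z,
        assoc_central_mid (central_assoc h2 c⁻¹ (c ^ (-(n : ℤ))) z),
        mul_comm_eq c⁻¹ (c ^ (-(n : ℤ)) * z),
        assoc_central_mid (central_comm h2 c⁻¹ (c ^ (-(n : ℤ)) * z)),
        slot2_slide_inv hM h2, ih]

theorem invk2' (hM : IsMoufang L) (h2 : ClassTwo L) (c z w : L) (k : ℤ) :
    assoc c⁻¹ (c ^ k * z) w = assoc c⁻¹ z w := by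
  induction k using Int.induction_on with
  | zero => rw [zpow_zero', one_mul]
  | succ n ih =>
    rw [zpow_succ' hM, mul_assoc_eq c (c ^ (n : ℤ)) z,
        assoc_central_mid (central_assoc h2 c (c ^ (n : ℤ)) z),
        mul_comm_eq c (c ^ (n : ℤ) * z),
        assoc_central_mid (central_comm h2 c (c ^ (n : ℤ) * z)),
        slot2_slide_c hM h2, ih]
  | pred n ih =>
    rw [zpow_pred' hM, mul_assoc_eq c⁻¹ (c ^ (-(n : ℤ))) z,
        assoc_central_mid (central_assoc h2 c⁻¹ (c ^ (-(n : ℤ))) z),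
        mul_comm_eq c⁻¹ (c ^ (-(n : ℤ)) * z),
        assoc_central_mid (central_comm h2 c⁻¹ (c ^ (-(n : ℤ)) * z)),
        slot2_slide hM h2, ih]

theorem homog (hM : IsMoufang L) (h2 : ClassTwo L) (c z w : L) (k : ℤ) :
    assoc (c ^ k) z w = (assoc c z w) ^ k := by
  induction k using Int.induction_on with
  | zero => rw [zpow_zero', zpow_zero', assoc_one_left]
  | succ n ih =>
    have hvan : ∀ u : L, assoc c (c ^ (n : ℤ)) u = 1 := by
      intro u
      have h := invk2 hM h2 c (1 : L) u (n : ℤ)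
      rwa [mul_one, assoc_one_mid] at h
    have hpent := pentagon h2 c (c ^ (n : ℤ)) z w
    rw [hvan, hvan, one_mul, mul_one, ← zpow_succ' hM,
        invk2 hM h2 c z w (n : ℤ), ih] at hpent
    rw [hpent, zpow_mul_self hM]
  | pred n ih =>
    have hvan : ∀ u : L, assoc c⁻¹ (c ^ (-(n : ℤ))) u = 1 := by
      intro u
      have h := invk2' hM h2 c (1 : L) u (-(n : ℤ))
      rwa [mul_one, assoc_one_mid] at h
    have hpent := pentagon h2 c⁻¹ (c ^ (-(n : ℤ))) z w
    rw [hvan, hvan, one_mul, mul_one, ← zpow_pred' hM,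
        invk2' hM h2 c z w (-(n : ℤ)), hom_neg hM h2, ih] at hpent
    rw [hpent, zpow_mul_inv_self hM]

end IPLoop

open IPLoop in
/-- In a Moufang loop of class at most 2,
`((c^k d)c)e = (c^k(d(ce)))·[c,d,e]^(k-1)`, and consequently the `M_k`-law
holds identically if and only if `[c,d,e]^(k-1) = 1` for all `c, d, e`. -/
theorem stmt8 {L : Type*} [IPLoop L] (hM : IsMoufang L) (h2 : ClassTwo L) :
    (∀ (c d e : L) (k : ℤ),
      ((c ^ k * d) * c) * e = (c ^ k * (d * (c * e))) * assoc c d e ^ (k - 1)) ∧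
    ∀ k : ℤ,
      ((∀ c d e : L, c ^ k * (d * (c * e)) = ((c ^ k * d) * c) * e) ↔
        ∀ c d e : L, assoc c d e ^ (k - 1) = 1) := by
  have part1 : ∀ (c d e : L) (k : ℤ),
      ((c ^ k * d) * c) * e = (c ^ k * (d * (c * e))) * assoc c d e ^ (k - 1) := by
    intro c d e k
    have hc1 := central_assoc h2 (c ^ k) d (c * e)
    have key : assoc (c ^ k) d (c * e) * assoc (c ^ k * d) c e
        = assoc c d e ^ (k - 1) := by
      rw [homog hM h2 c d (c * e) k, slot3_absorb hM h2 c d e,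
          invk1 hM h2 c d e k, skew12 hM h2 c d e, zpow_mul_inv_self hM]
    rw [mul_assoc_eq (c ^ k * d) c e, mul_assoc_eq (c ^ k) d (c * e), hc1.mm, key]
  refine ⟨part1, fun k => ⟨fun h c d e => ?_, fun h c d e => ?_⟩⟩
  · have h1 := part1 c d e k
    rw [← h c d e] at h1
    have h3 : (c ^ k * (d * (c * e))) * assoc c d e ^ (k - 1)
        = (c ^ k * (d * (c * e))) * 1 := by
      rw [IPLoop.mul_one]
      exact h1.symm
    exact mul_left_cancel' h3
  · rw [part1 c d e k, h c d e, IPLoop.mul_one]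
end

section
/- Let L be a Moufang loop of class at most 2 such that [c,d,e]² = 1 for all c, d, e ∈ L (equivalently, the subloop generated by the associators contains no element of order 3). Then L is a G-loop: every loop isotope of L is isomorphic to L. -/
/-- A (general) loop: multiplication with two-sided identity in which left and
right translations are bijective. -/
class Loop (M : Type*) extends Mul M, One M where
  one_mul : ∀ a : M, 1 * a = a
  mul_one : ∀ a : M, a * 1 = a
  mul_left_bijective : ∀ a : M, Function.Bijective fun x : M => a * x
  mul_right_bijective : ∀ a : M, Function.Bijective fun x : M => x * a


namespace Stmt9

open IPLoop

variable {L : Type*} [IPLoop L]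

@[simp] lemma lone_mul (a : L) : 1 * a = a := IPLoop.one_mul a
@[simp] lemma lmul_one (a : L) : a * 1 = a := IPLoop.mul_one a
@[simp] lemma linv_mul_cancel_left (a x : L) : a⁻¹ * (a * x) = x := IPLoop.inv_mul_cancel_left a x
@[simp] lemma lmul_inv_cancel_right (a x : L) : (x * a) * a⁻¹ = x := IPLoop.mul_inv_cancel_right a x

@[simp] lemma linv_mul (a : L) : a⁻¹ * a = 1 := by
  have h := IPLoop.inv_mul_cancel_left a (1 : L)
  rwa [lmul_one] at h

@[simp] lemma lmul_inv (a : L) : a * a⁻¹ = 1 := by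
  have h := IPLoop.mul_inv_cancel_right a (1 : L)
  rwa [lone_mul] at h

@[simp] lemma linv_inv (a : L) : a⁻¹⁻¹ = a := by
  have h := IPLoop.inv_mul_cancel_left a⁻¹ a
  rwa [linv_mul, lmul_one] at h

@[simp] lemma lmul_inv_cancel_left (a x : L) : a * (a⁻¹ * x) = x := by
  have h := IPLoop.inv_mul_cancel_left a⁻¹ x
  rwa [linv_inv] at h

@[simp] lemma linv_mul_cancel_right (a x : L) : (x * a⁻¹) * a = x := by
  have h := IPLoop.mul_inv_cancel_right a⁻¹ x
  rwa [linv_inv] at h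

@[simp] lemma lone_inv : (1 : L)⁻¹ = 1 := by
  have h := linv_mul (1 : L); rwa [lmul_one] at h

lemma lmul_left_cancel {a x y : L} (h : a * x = a * y) : x = y := by
  have := congrArg (a⁻¹ * ·) h
  simpa using this

lemma lmul_right_cancel {a x y : L} (h : x * a = y * a) : x = y := by
  have := congrArg (· * a⁻¹) h
  simpa using this

lemma eq_of_inv_mul_eq_one {u v : L} (h : u⁻¹ * v = 1) : u = v := by
  have h2 : u * (u⁻¹ * v) = u * 1 := congrArg _ h
  rw [lmul_inv_cancel_left, lmul_one] at h2
  exact h2.symm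

lemma inv_mul_eq_one_of_eq {u v : L} (h : u * v = u * u) : True := trivial

lemma inv_mul_self_eq_one {u v : L} (h : u = v) : u⁻¹ * v = 1 := by subst h; simp

lemma inv_eq_self_of_sq {z : L} (h : z * z = 1) : z⁻¹ = z := by
  have h2 : z⁻¹ * (z * z) = z⁻¹ * 1 := congrArg _ h
  rw [linv_mul_cancel_left, lmul_one] at h2
  exact h2.symm

lemma lmul_inv_rev (a b : L) : (a * b)⁻¹ = b⁻¹ * a⁻¹ := by
  have h1 : (a * b)⁻¹ * a = b⁻¹ := by
    have h := IPLoop.inv_mul_cancel_left (a * b) b⁻¹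
    rwa [lmul_inv_cancel_right] at h
  have h2 := IPLoop.mul_inv_cancel_right a ((a * b)⁻¹)
  rw [h1] at h2
  exact h2.symm

/-! ### centrality interface -/

lemma assoc_eq_one_iff {x y z : L} : assoc x y z = 1 ↔ (x * y) * z = x * (y * z) := by
  constructor
  · intro h; exact (eq_of_inv_mul_eq_one h).symm
  · intro h; exact inv_mul_self_eq_one h.symm

lemma comm_eq_one_iff {x y : L} : comm x y = 1 ↔ x * y = y * x := by
  constructor
  · intro h; exact (eq_of_inv_mul_eq_one h).symm
  · intro h; exact inv_mul_self_eq_one h.symm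

lemma ctr_comm {z : L} (hz : inCenter z) (x : L) : z * x = x * z :=
  comm_eq_one_iff.mp (hz.1 x)

lemma ctr_a1 {z : L} (hz : inCenter z) (x y : L) : (z * x) * y = z * (x * y) :=
  assoc_eq_one_iff.mp (hz.2 x y).1

lemma ctr_a2 {z : L} (hz : inCenter z) (x y : L) : (x * z) * y = x * (z * y) :=
  assoc_eq_one_iff.mp (hz.2 x y).2.1

lemma ctr_a3 {z : L} (hz : inCenter z) (x y : L) : (x * y) * z = x * (y * z) :=
  assoc_eq_one_iff.mp (hz.2 x y).2.2

lemma sl_left {z : L} (hz : inCenter z) (x y : L) : (x * z) * y = (x * y) * z := by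
  rw [← ctr_comm hz x, ctr_a1 hz, ctr_comm hz]

lemma sl_right {z : L} (hz : inCenter z) (x y : L) : x * (y * z) = (x * y) * z :=
  (ctr_a3 hz x y).symm

lemma sl_mid {z : L} (hz : inCenter z) (x y : L) : x * (z * y) = (x * y) * z := by
  rw [← ctr_a2 hz, sl_left hz]

lemma sl_out {z : L} (hz : inCenter z) (x y : L) : (z * x) * y = (x * y) * z := by
  rw [ctr_a1 hz, ctr_comm hz]

lemma inCenter_of (z : L) (h1 : ∀ x : L, z * x = x * z)
    (h2 : ∀ x y : L, (z * x) * y = z * (x * y))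
    (h3 : ∀ x y : L, (x * z) * y = x * (z * y))
    (h4 : ∀ x y : L, (x * y) * z = x * (y * z)) : inCenter z :=
  ⟨fun x => comm_eq_one_iff.mpr (h1 x),
   fun x y => ⟨assoc_eq_one_iff.mpr (h2 x y), assoc_eq_one_iff.mpr (h3 x y),
     assoc_eq_one_iff.mpr (h4 x y)⟩⟩

lemma inCenter_one : inCenter (1 : L) :=
  inCenter_of 1 (fun x => by simp) (fun x y => by simp) (fun x y => by simp)
    (fun x y => by simp)

lemma inCenter_mul {z w : L} (hz : inCenter z) (hw : inCenter w) : inCenter (z * w) := by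
  have h1 : ∀ x : L, (z * w) * x = x * (z * w) := fun x => by
    calc (z * w) * x = z * (w * x) := ctr_a1 hz w x
      _ = z * (x * w) := by rw [ctr_comm hw x]
      _ = (z * x) * w := sl_right hw z x
      _ = (x * z) * w := by rw [ctr_comm hz x]
      _ = x * (z * w) := ctr_a3 hw x z
  have h4 : ∀ x y : L, (x * y) * (z * w) = x * (y * (z * w)) := fun x y => by
    calc (x * y) * (z * w) = ((x * y) * z) * w := sl_right hw (x * y) z
      _ = (x * (y * z)) * w := by rw [ctr_a3 hz x y]
      _ = x * ((y * z) * w) := ctr_a3 hw x (y * z)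
      _ = x * (y * (z * w)) := by rw [ctr_a3 hw y z]
  have h2 : ∀ x y : L, ((z * w) * x) * y = (z * w) * (x * y) := fun x y => by
    calc ((z * w) * x) * y = (x * (z * w)) * y := by rw [h1 x]
      _ = ((x * z) * w) * y := by rw [sl_right hw x z]
      _ = ((x * z) * y) * w := sl_left hw (x * z) y
      _ = ((x * y) * z) * w := by rw [sl_left hz x y]
      _ = (x * y) * (z * w) := ctr_a3 hw (x * y) z
      _ = (z * w) * (x * y) := (h1 (x * y)).symm
  have h3 : ∀ x y : L, (x * (z * w)) * y = x * ((z * w) * y) := fun x y => by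
    calc (x * (z * w)) * y = ((x * z) * w) * y := by rw [sl_right hw x z]
      _ = ((x * z) * y) * w := sl_left hw (x * z) y
      _ = ((x * y) * z) * w := by rw [sl_left hz x y]
      _ = (x * y) * (z * w) := ctr_a3 hw (x * y) z
      _ = x * (y * (z * w)) := h4 x y
      _ = x * ((z * w) * y) := by rw [h1 y]
  exact inCenter_of _ h1 h2 h3 h4

lemma inCenter_inv {z : L} (hz : inCenter z) : inCenter z⁻¹ := by
  have hc : ∀ x : L, z⁻¹ * x = x * z⁻¹ := fun x => by
    calc z⁻¹ * x = z⁻¹ * ((x * z⁻¹) * z) := by rw [linv_mul_cancel_right]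
      _ = z⁻¹ * (z * (x * z⁻¹)) := by rw [← ctr_comm hz]
      _ = x * z⁻¹ := by rw [linv_mul_cancel_left]
  have a1 : ∀ x y : L, (z⁻¹ * x) * y = z⁻¹ * (x * y) := fun x y => by
    apply lmul_left_cancel (a := z)
    rw [← ctr_a1 hz, lmul_inv_cancel_left, lmul_inv_cancel_left]
  have a3 : ∀ x y : L, (x * y) * z⁻¹ = x * (y * z⁻¹) := fun x y => by
    apply lmul_left_cancel (a := z)
    calc z * ((x * y) * z⁻¹) = ((x * y) * z⁻¹) * z := ctr_comm hz _
      _ = x * y := linv_mul_cancel_right z (x * y)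
      _ = x * ((y * z⁻¹) * z) := by rw [linv_mul_cancel_right]
      _ = x * (z * (y * z⁻¹)) := by rw [← ctr_comm hz]
      _ = (x * z) * (y * z⁻¹) := (ctr_a2 hz x (y * z⁻¹)).symm
      _ = (z * x) * (y * z⁻¹) := by rw [← ctr_comm hz x]
      _ = z * (x * (y * z⁻¹)) := ctr_a1 hz x (y * z⁻¹)
  have a2 : ∀ x y : L, (x * z⁻¹) * y = x * (z⁻¹ * y) := fun x y => by
    calc (x * z⁻¹) * y = (z⁻¹ * x) * y := by rw [hc x]
      _ = z⁻¹ * (x * y) := a1 x y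
      _ = (x * y) * z⁻¹ := hc (x * y)
      _ = x * (y * z⁻¹) := a3 x y
      _ = x * (z⁻¹ * y) := by rw [← hc y]
  exact inCenter_of _ hc a1 a2 a3

lemma linv_central_mul {z : L} (hz : inCenter z) (x : L) : (x * z)⁻¹ = x⁻¹ * z⁻¹ := by
  rw [lmul_inv_rev, ctr_comm (inCenter_inv hz)]

lemma slide_mul_mul {c d : L} (hc : inCenter c) (hd : inCenter d) (p q : L) :
    (p * c) * (q * d) = (p * q) * (c * d) := by
  rw [sl_right hd, sl_left hc, ctr_a3 hd]

lemma assocEq (x y z : L) : (x * y) * z = (x * (y * z)) * IPLoop.assoc x y z := by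
  rw [IPLoop.assoc, lmul_inv_cancel_left]

lemma commEq (x y : L) : x * y = (y * x) * IPLoop.comm x y := by
  rw [IPLoop.comm, lmul_inv_cancel_left]

/-! ### cancel central -/

lemma cancel_central {c : L} (hc : inCenter c) (u v : L) :
    (u * c)⁻¹ * (v * c) = u⁻¹ * v := by
  rw [linv_central_mul hc, slide_mul_mul (inCenter_inv hc) hc, linv_mul, lmul_one]

lemma slideA3 {c : L} (hc : inCenter c) (x y z : L) :
    IPLoop.assoc x y (z * c) = IPLoop.assoc x y z := by
  unfold IPLoop.assoc
  rw [sl_right hc y z, sl_right hc x (y*z), sl_right hc (x*y) z, cancel_central hc]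

lemma slideA2 {c : L} (hc : inCenter c) (x y z : L) :
    IPLoop.assoc x (y * c) z = IPLoop.assoc x y z := by
  unfold IPLoop.assoc
  rw [sl_left hc y z, sl_right hc x (y*z), sl_right hc x y, sl_left hc (x*y) z,
    cancel_central hc]

lemma slideA1 {c : L} (hc : inCenter c) (x y z : L) :
    IPLoop.assoc (x * c) y z = IPLoop.assoc x y z := by
  unfold IPLoop.assoc
  rw [sl_left hc x (y*z), sl_left hc x y, sl_left hc (x*y) z, cancel_central hc]

end Stmt9

/-! ### the bundled hypothesis class -/

open IPLoop in
class MoufC2 (L : Type*) extends IPLoop L where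
  mouf : IsMoufang L
  cls2 : ClassTwo L
  asq : ∀ x y z : L, IPLoop.assoc x y z * IPLoop.assoc x y z = 1

namespace Stmt9

open IPLoop

variable {L : Type*} [MoufC2 L]

lemma hactr (x y z : L) : inCenter (IPLoop.assoc x y z) := MoufC2.cls2.2 x y z
lemma hcctr (x y : L) : inCenter (IPLoop.comm x y) := MoufC2.cls2.1 x y

lemma assoc_one1 (y z : L) : IPLoop.assoc (1:L) y z = 1 := by
  rw [IPLoop.assoc, lone_mul, lone_mul, linv_mul]
lemma assoc_one2 (x z : L) : IPLoop.assoc x (1:L) z = 1 := by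
  rw [IPLoop.assoc, lone_mul, lmul_one, linv_mul]
lemma assoc_one3 (x y : L) : IPLoop.assoc x y (1:L) = 1 := by
  rw [IPLoop.assoc, lmul_one, lmul_one, linv_mul]

lemma ainv (x y z : L) : (IPLoop.assoc x y z)⁻¹ = IPLoop.assoc x y z :=
  inv_eq_self_of_sq (MoufC2.asq x y z)

lemma eq_inv_of_mul_eq_one {u v : L} (h : u * v = 1) : u = v⁻¹ := by
  have h5 := lmul_inv_cancel_right v u
  rw [h] at h5
  exact h5.symm.trans (lone_mul v⁻¹)

/-- consequence of the right Moufang identity -/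
lemma starL (c d e : L) :
    (IPLoop.assoc c e c * IPLoop.assoc d (c*e) c) * IPLoop.assoc d c e = 1 := by
  have h := MoufC2.mouf c d e
  have expand : ((d * c) * e) * c =
      ((d * (c * (e * c))) * ((IPLoop.assoc c e c * IPLoop.assoc d (c*e) c) *
        IPLoop.assoc d c e)) := by
    rw [assocEq d c e, sl_left (hactr d c e), assocEq d (c*e) c, assocEq c e c,
      sl_right (hactr c e c), ctr_a3 (hactr d (c*e) c), ctr_a3 (hactr d c e)]
  rw [h] at expand
  have h2 : (d * (c * (e * c))) * 1 = (d * (c * (e * c))) *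
      ((IPLoop.assoc c e c * IPLoop.assoc d (c*e) c) * IPLoop.assoc d c e) := by
    rw [lmul_one]; exact expand
  exact (lmul_left_cancel h2).symm

lemma flexL (c e : L) : IPLoop.assoc c e c = 1 := by
  have h := starL c 1 e
  rwa [assoc_one1, assoc_one1, lmul_one, lmul_one] at h

lemma S1L (d c e : L) : IPLoop.assoc d (c*e) c = IPLoop.assoc d c e := by
  have h := starL c d e
  rw [flexL, lone_mul] at h
  rw [eq_inv_of_mul_eq_one h, ainv]

/-- left Moufang identity -/
lemma leftMouf (c d e : L) : c * (e * (c * d)) = ((c * e) * c) * d := by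
  have h := congrArg Inv.inv (MoufC2.mouf c⁻¹ d⁻¹ e⁻¹)
  simpa only [lmul_inv_rev, linv_inv] using h

lemma S2L (c d e : L) : IPLoop.assoc c (e*c) d = IPLoop.assoc e c d := by
  have h := leftMouf c d e
  have expand : ((c * e) * c) * d = (c * (e * (c * d))) *
      (IPLoop.assoc e c d * IPLoop.assoc c (e*c) d) := by
    rw [assocEq c e c, flexL, lmul_one, assocEq c (e*c) d, assocEq e c d,
      sl_right (hactr e c d), ctr_a3 (hactr c (e*c) d)]
  rw [← h] at expand
  have h2 : (c * (e * (c * d))) * 1 = (c * (e * (c * d))) *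
      (IPLoop.assoc e c d * IPLoop.assoc c (e*c) d) := by rw [lmul_one]; exact expand
  have h3 := (lmul_left_cancel h2).symm
  have h4 : IPLoop.assoc e c d = (IPLoop.assoc c (e*c) d)⁻¹ := eq_inv_of_mul_eq_one h3
  rw [h4, ainv]

lemma IRL (x y z : L) : IPLoop.assoc x y z = IPLoop.assoc z⁻¹ y⁻¹ x⁻¹ := by
  have h : IPLoop.assoc z⁻¹ y⁻¹ x⁻¹ = ((x*y)*z) * (x*(y*z))⁻¹ := by
    rw [IPLoop.assoc]
    rw [show y⁻¹ * x⁻¹ = (x*y)⁻¹ from (lmul_inv_rev x y).symm]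
    rw [show z⁻¹ * (x*y)⁻¹ = ((x*y)*z)⁻¹ from (lmul_inv_rev (x*y) z).symm]
    rw [show z⁻¹ * y⁻¹ = (y*z)⁻¹ from (lmul_inv_rev y z).symm]
    rw [show (y*z)⁻¹ * x⁻¹ = (x*(y*z))⁻¹ from (lmul_inv_rev x (y*z)).symm]
    rw [linv_inv]
  rw [h, assocEq x y z, ← ctr_comm (hactr x y z) (x*(y*z)), lmul_inv_cancel_right]

/-- the cocycle identity -/
lemma CL (x y z w : L) :
    IPLoop.assoc x y (z*w) * IPLoop.assoc (x*y) z w =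
      (IPLoop.assoc y z w * IPLoop.assoc x (y*z) w) * IPLoop.assoc x y z := by
  have E3 : ((x*y)*z)*w = (x*(y*(z*w))) *
      ((IPLoop.assoc y z w * IPLoop.assoc x (y*z) w) * IPLoop.assoc x y z) := by
    rw [assocEq x y z, sl_left (hactr x y z), assocEq x (y*z) w, assocEq y z w,
      sl_right (hactr y z w), ctr_a3 (hactr x (y*z) w), ctr_a3 (hactr x y z)]
  have E2 : ((x*y)*z)*w = ((x*(y*(z*w))) * IPLoop.assoc x y (z*w)) *
      IPLoop.assoc (x*y) z w := by
    rw [assocEq (x*y) z w, assocEq x y (z*w)]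
  have h := E2.symm.trans E3
  rw [ctr_a3 (hactr (x*y) z w)] at h
  exact lmul_left_cancel h

/-! ### the group of central square-one elements -/

def C2 (L : Type*) [MoufC2 L] : Type _ := {z : L // inCenter z ∧ z * z = 1}

instance : CommGroup (C2 L) where
  mul a b := ⟨a.1 * b.1, inCenter_mul a.2.1 b.2.1, by
    calc (a.1 * b.1) * (a.1 * b.1) = ((a.1 * b.1) * a.1) * b.1 :=
          (ctr_a3 b.2.1 _ _).symm
      _ = ((a.1 * a.1) * b.1) * b.1 := by rw [sl_left b.2.1 a.1 a.1]
      _ = (a.1 * a.1) * (b.1 * b.1) := ctr_a3 b.2.1 _ _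
      _ = 1 := by rw [a.2.2, b.2.2, lmul_one]⟩
  one := ⟨1, inCenter_one, by rw [lmul_one]⟩
  inv a := a
  mul_assoc a b c := Subtype.ext (ctr_a3 c.2.1 a.1 b.1)
  one_mul a := Subtype.ext (lone_mul a.1)
  mul_one a := Subtype.ext (lmul_one a.1)
  inv_mul_cancel a := Subtype.ext a.2.2
  mul_comm a b := Subtype.ext (ctr_comm a.2.1 b.1)

lemma c2_mul_val (a b : C2 L) : (a * b).1 = a.1 * b.1 := rfl
lemma c2_one_val : ((1 : C2 L)).1 = 1 := rfl
lemma c2_sq (a : C2 L) : a * a = 1 := Subtype.ext a.2.2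
lemma c2_inv (a : C2 L) : a⁻¹ = a := rfl

/-! ### the quotient group L / Z -/

instance qSetoid : Setoid L where
  r x y := ∃ z, inCenter z ∧ y = x * z
  iseqv := by
    constructor
    · exact fun x => ⟨1, inCenter_one, (lmul_one x).symm⟩
    · rintro x y ⟨z, hz, rfl⟩
      exact ⟨z⁻¹, inCenter_inv hz, (lmul_inv_cancel_right z x).symm⟩
    · rintro x y w ⟨z, hz, rfl⟩ ⟨u, hu, rfl⟩
      exact ⟨z * u, inCenter_mul hz hu, ctr_a3 hu x z⟩

def Qt (L : Type*) [MoufC2 L] : Type _ := Quotient (qSetoid (L := L))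

def qmk (x : L) : Qt L := Quotient.mk _ x

lemma qrel_of_eq {x y : L} (h : x = y) : x ≈ y := h ▸ Setoid.refl x

instance : Add (Qt L) :=
  ⟨Quotient.map₂ (· * ·) (by
    rintro x x' ⟨z, hz, rfl⟩ y y' ⟨w, hw, rfl⟩
    exact ⟨z * w, inCenter_mul hz hw, slide_mul_mul hz hw x y⟩)⟩

instance : Zero (Qt L) := ⟨qmk 1⟩

instance : Neg (Qt L) :=
  ⟨Quotient.map Inv.inv (by
    rintro x x' ⟨z, hz, rfl⟩
    exact ⟨z⁻¹, inCenter_inv hz, linv_central_mul hz x⟩)⟩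

instance : AddCommGroup (Qt L) where
  add := (· + ·)
  zero := 0
  neg := Neg.neg
  add_assoc a b c := by
    refine Quotient.inductionOn₃ a b c (fun x y z => ?_)
    refine Quotient.sound ⟨(IPLoop.assoc x y z)⁻¹, inCenter_inv (hactr x y z), ?_⟩
    show x * (y * z) = ((x * y) * z) * (IPLoop.assoc x y z)⁻¹
    rw [assocEq x y z, lmul_inv_cancel_right]
  zero_add a := Quotient.inductionOn a
    (fun x => Quotient.sound (qrel_of_eq (lone_mul x)))
  add_zero a := Quotient.inductionOn a
    (fun x => Quotient.sound (qrel_of_eq (lmul_one x)))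
  neg_add_cancel a := Quotient.inductionOn a
    (fun x => Quotient.sound (qrel_of_eq (linv_mul x)))
  add_comm a b := by
    refine Quotient.inductionOn₂ a b (fun x y => ?_)
    refine Quotient.sound ⟨IPLoop.comm y x, hcctr y x, ?_⟩
    show y * x = (x * y) * IPLoop.comm y x
    exact commEq y x
  nsmul := nsmulRec
  zsmul := zsmulRec
  nsmul_zero _ := rfl
  nsmul_succ _ _ := rfl
  zsmul_zero' _ := rfl
  zsmul_succ' _ _ := rfl
  zsmul_neg' _ _ := rfl

lemma qmk_mul (x y : L) : qmk (x * y) = qmk x + qmk y := rfl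
lemma qmk_one : (qmk 1 : Qt L) = 0 := rfl
lemma qmk_inv (x : L) : -(qmk x) = qmk x⁻¹ := rfl
lemma qmk_surjective : Function.Surjective (qmk (L := L)) :=
  fun q => Quotient.inductionOn q (fun x => ⟨x, rfl⟩)

/-! ### the lifted associator map -/

def abRaw (x y z : L) : C2 L := ⟨IPLoop.assoc x y z, hactr x y z, MoufC2.asq x y z⟩

lemma abRaw_wd3 (x y : L) : ∀ z z' : L, z ≈ z' → abRaw x y z = abRaw x y z' := by
  rintro z z' ⟨c, hc, rfl⟩
  exact Subtype.ext (slideA3 hc x y z).symm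

lemma abRaw_wd2 (x : L) : ∀ y y' : L, y ≈ y' → ∀ z : L, abRaw x y z = abRaw x y' z := by
  rintro y y' ⟨c, hc, rfl⟩ z
  exact Subtype.ext (slideA2 hc x y z).symm

lemma abRaw_wd1 : ∀ x x' : L, x ≈ x' → ∀ y z : L, abRaw x y z = abRaw x' y z := by
  rintro x x' ⟨c, hc, rfl⟩ y z
  exact Subtype.ext (slideA1 hc x y z).symm

def Ab (q1 q2 q3 : Qt L) : C2 L :=
  Quotient.liftOn q1
    (fun x => Quotient.liftOn q2
      (fun y => Quotient.liftOn q3 (fun z => abRaw x y z) (abRaw_wd3 x y))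
      (fun y y' h => by
        refine Quotient.inductionOn q3 (fun z => ?_)
        exact abRaw_wd2 x y y' h z))
    (fun x x' h => by
      refine Quotient.inductionOn₂ q2 q3 (fun y z => ?_)
      exact abRaw_wd1 x x' h y z)

lemma Ab_mk (x y z : L) : Ab (qmk x) (qmk y) (qmk z) = abRaw x y z := rfl

/-! ### transferred axioms -/

lemma Ab_one1 (b c : Qt L) : Ab 0 b c = 1 := by
  obtain ⟨y, rfl⟩ := qmk_surjective b; obtain ⟨z, rfl⟩ := qmk_surjective c
  exact Subtype.ext (assoc_one1 y z)

lemma Ab_one2 (a c : Qt L) : Ab a 0 c = 1 := by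
  obtain ⟨x, rfl⟩ := qmk_surjective a; obtain ⟨z, rfl⟩ := qmk_surjective c
  exact Subtype.ext (assoc_one2 x z)

lemma Ab_one3 (a b : Qt L) : Ab a b 0 = 1 := by
  obtain ⟨x, rfl⟩ := qmk_surjective a; obtain ⟨y, rfl⟩ := qmk_surjective b
  exact Subtype.ext (assoc_one3 x y)

lemma Ab_flex (a b : Qt L) : Ab a b a = 1 := by
  obtain ⟨x, rfl⟩ := qmk_surjective a; obtain ⟨y, rfl⟩ := qmk_surjective b
  exact Subtype.ext (flexL x y)

lemma Ab_S1 (a b c : Qt L) : Ab a (b + c) b = Ab a b c := by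
  obtain ⟨x, rfl⟩ := qmk_surjective a; obtain ⟨y, rfl⟩ := qmk_surjective b
  obtain ⟨z, rfl⟩ := qmk_surjective c
  exact Subtype.ext (S1L x y z)

lemma Ab_S2 (a b c : Qt L) : Ab b (a + b) c = Ab a b c := by
  obtain ⟨x, rfl⟩ := qmk_surjective a; obtain ⟨y, rfl⟩ := qmk_surjective b
  obtain ⟨z, rfl⟩ := qmk_surjective c
  exact Subtype.ext (S2L y z x)

lemma Ab_IR (a b c : Qt L) : Ab a b c = Ab (-c) (-b) (-a) := by
  obtain ⟨x, rfl⟩ := qmk_surjective a; obtain ⟨y, rfl⟩ := qmk_surjective b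
  obtain ⟨z, rfl⟩ := qmk_surjective c
  exact Subtype.ext (IRL x y z)

lemma Ab_C (a b c d : Qt L) :
    Ab a b (c + d) * Ab (a + b) c d = (Ab b c d * Ab a (b + c) d) * Ab a b c := by
  obtain ⟨x, rfl⟩ := qmk_surjective a; obtain ⟨y, rfl⟩ := qmk_surjective b
  obtain ⟨z, rfl⟩ := qmk_surjective c; obtain ⟨w, rfl⟩ := qmk_surjective d
  exact Subtype.ext (CL x y z w)

lemma Ab_sq (a b c : Qt L) : Ab a b c * Ab a b c = 1 := c2_sq _

lemma Ab_inv (a b c : Qt L) : (Ab a b c)⁻¹ = Ab a b c := rfl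

/-! ### symmetry and trilinearity of Ab -/

lemma Ab_congr {g g' h h' k k' : Qt L} (hg : g = g') (hh : h = h') (hk : k = k') :
    Ab g h k = Ab g' h' k' := by rw [hg, hh, hk]

lemma mv_M1 (g h k : Qt L) : Ab g h k = Ab g (h + k) h := (Ab_S1 g h k).symm

lemma mv_M1i (g h k : Qt L) : Ab g h k = Ab g k (h - k) := by
  have h2 := Ab_S1 g k (h - k)
  rw [show k + (h - k) = h by abel] at h2
  exact h2

lemma mv_M2 (g h k : Qt L) : Ab g h k = Ab h (g + h) k := (Ab_S2 g h k).symm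

lemma mv_M2i (g h k : Qt L) : Ab g h k = Ab (h - g) g k := by
  have h2 := Ab_S2 (h - g) g k
  rw [show (h - g) + g = h by abel] at h2
  exact h2

lemma Ab_T23 (a b c : Qt L) : Ab a b c = Ab a c b := by
  calc Ab a b c = Ab a b c := rfl
    _ = Ab (a) (b + c) (b) := by
        rw [mv_M1 (a) (b) (c)]
        try exact Ab_congr (by abel) (by abel) (by abel)
    _ = Ab (a) (b + b + c) (b + c) := by
        rw [mv_M1 (a) (b + c) (b)]
        try exact Ab_congr (by abel) (by abel) (by abel)
    _ = Ab (b + b + c) (a + b + b + c) (b + c) := by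
        rw [mv_M2 (a) (b + b + c) (b + c)]
        try exact Ab_congr (by abel) (by abel) (by abel)
    _ = Ab (b + b + c) (b + c) (a + b) := by
        rw [mv_M1i (b + b + c) (a + b + b + c) (b + c)]
        try exact Ab_congr (by abel) (by abel) (by abel)
    _ = Ab (-b) (b + b + c) (a + b) := by
        rw [mv_M2i (b + b + c) (b + c) (a + b)]
        try exact Ab_congr (by abel) (by abel) (by abel)
    _ = Ab (-b) (a + b) (-a + b + c) := by
        rw [mv_M1i (-b) (b + b + c) (a + b)]
        try exact Ab_congr (by abel) (by abel) (by abel)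
    _ = Ab (a + b) (a) (-a + b + c) := by
        rw [mv_M2 (-b) (a + b) (-a + b + c)]
        try exact Ab_congr (by abel) (by abel) (by abel)
    _ = Ab (a + b) (b + c) (a) := by
        rw [mv_M1 (a + b) (a) (-a + b + c)]
        try exact Ab_congr (by abel) (by abel) (by abel)
    _ = Ab (-a + c) (a + b) (a) := by
        rw [mv_M2i (a + b) (b + c) (a)]
        try exact Ab_congr (by abel) (by abel) (by abel)
    _ = Ab (-a + c) (a) (b) := by
        rw [mv_M1i (-a + c) (a + b) (a)]
        try exact Ab_congr (by abel) (by abel) (by abel)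
    _ = Ab (a) (c) (b) := by
        rw [mv_M2 (-a + c) (a) (b)]
        try exact Ab_congr (by abel) (by abel) (by abel)

lemma Ab_T12 (a b c : Qt L) : Ab a b c = Ab b a c := by
  rw [Ab_IR a b c, Ab_T23, ← Ab_IR b a c]

lemma Ab_rot (a b c : Qt L) : Ab a b c = Ab b c a := by
  rw [Ab_T12, Ab_T23]

lemma Ab_altR (a b : Qt L) : Ab a b b = 1 := by
  have h := Ab_S1 a b 0
  rw [add_zero] at h
  rw [h, Ab_one3]

lemma Ab_altL (a b : Qt L) : Ab a a b = 1 := by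
  rw [Ab_IR]; exact Ab_altR _ _

lemma c2_cancel (x y : C2 L) : x * (x * y) = y := by
  rw [← mul_assoc, c2_sq, _root_.one_mul]

lemma c2_invv (x : C2 L) : x⁻¹ = x := inv_eq_of_mul_eq_one_right (c2_sq x)

/-- `D p q s t` measures the failure of additivity of `Ab` in the first slot. -/
def Dd (p q s t : Qt L) : C2 L := (Ab (p + q) s t * Ab p s t) * Ab q s t

lemma Ab_C' (g h k l : Qt L) :
    Ab g h (k + l) = ((Ab h k l * Ab g (h + k) l) * Ab g h k) * Ab (g + h) k l := by
  have h0 := Ab_C g h k l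
  rw [← h0, mul_assoc, c2_sq, _root_.mul_one]

lemma Dd_delta (g h k l : Qt L) : Dd k l g h = Dd h k g l * Dd g h k l := by
  unfold Dd
  rw [Ab_rot (k + l) g h, Ab_rot k g h, Ab_rot l g h, Ab_C' g h k l,
    Ab_T12 (h + k) g l, Ab_T12 h g l, Ab_T12 k g l]
  simp only [mul_comm, mul_left_comm, mul_assoc, c2_sq, c2_cancel, _root_.one_mul, _root_.mul_one]

lemma Dd_12 (p q s t : Qt L) : Dd p q s t = Dd q p s t := by
  unfold Dd
  rw [add_comm q p]
  simp only [mul_comm, mul_left_comm, mul_assoc]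

lemma Dd_34 (p q s t : Qt L) : Dd p q s t = Dd p q t s := by
  unfold Dd
  rw [Ab_T23 (p + q) s t, Ab_T23 p s t, Ab_T23 q s t]

lemma Dd_24 (g h k l : Qt L) : Dd g h k l = Dd g l k h := by
  have h1 := Dd_delta g h k l
  have h2 := Dd_delta g l k h
  rw [Dd_12 k h g l] at h2
  rw [Dd_12 l k g h] at h2
  -- h2 : Dd h k g l = Dd k l g h * Dd g l k h
  rw [h2] at h1
  -- h1 : Dd k l g h = (Dd k l g h * Dd g l k h) * Dd g h k l
  rw [mul_assoc] at h1
  have h4 : Dd g l k h * Dd g h k l = 1 := left_eq_mul.mp h1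
  calc Dd g h k l = Dd g l k h * (Dd g l k h * Dd g h k l) := (c2_cancel _ _).symm
    _ = Dd g l k h * 1 := by rw [h4]
    _ = Dd g l k h := _root_.mul_one _

lemma Dd_13 (p q s t : Qt L) : Dd p q s t = Dd s q p t := by
  calc Dd p q s t = Dd p q t s := Dd_34 _ _ _ _
    _ = Dd p s t q := Dd_24 _ _ _ _
    _ = Dd s p t q := Dd_12 _ _ _ _
    _ = Dd s q t p := Dd_24 _ _ _ _
    _ = Dd s q p t := Dd_34 _ _ _ _

lemma Dd_pairswap (p q s t : Qt L) : Dd p q s t = Dd s t p q := by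
  calc Dd p q s t = Dd s q p t := Dd_13 _ _ _ _
    _ = Dd s t p q := Dd_24 _ _ _ _

lemma Dd_one (p q s t : Qt L) : Dd p q s t = 1 := by
  have h1 := Dd_delta s t p q
  -- h1 : Dd p q s t = Dd t p s q * Dd s t p q
  have e1 : Dd t p s q = Dd p q s t := by
    calc Dd t p s q = Dd p t s q := Dd_12 _ _ _ _
      _ = Dd p q s t := Dd_24 _ _ _ _
  have e2 : Dd s t p q = Dd p q s t := Dd_pairswap _ _ _ _
  rw [e1, e2] at h1
  -- h1 : Dd p q s t = Dd p q s t * Dd p q s t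
  exact (left_eq_mul.mp h1)

lemma Ab_L1 (p q s t : Qt L) : Ab (p + q) s t = Ab p s t * Ab q s t := by
  have h := Dd_one p q s t
  unfold Dd at h
  calc Ab (p + q) s t
      = ((Ab (p + q) s t * Ab p s t) * Ab q s t) * (Ab p s t * Ab q s t) := by
        simp only [mul_comm, mul_left_comm, mul_assoc, c2_sq, c2_cancel, _root_.one_mul, _root_.mul_one]
    _ = 1 * (Ab p s t * Ab q s t) := by rw [h]
    _ = Ab p s t * Ab q s t := _root_.one_mul _

lemma Ab_L2 (p q r s : Qt L) : Ab p (q + r) s = Ab p q s * Ab p r s := by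
  rw [Ab_T12 p (q + r) s, Ab_L1, ← Ab_T12 q p s, ← Ab_T12 r p s]

lemma Ab_rot2 (a b c : Qt L) : Ab a b c = Ab c a b := by
  rw [Ab_rot, Ab_rot]

lemma Ab_L3 (p q r s : Qt L) : Ab p q (r + s) = Ab p q r * Ab p q s := by
  rw [Ab_rot2 p q (r + s), Ab_L1, ← Ab_rot2 p q r, ← Ab_rot2 p q s]

/-! ### the bilinear form B and the quadratic refinement μ -/

section AB

variable (a b : L)

def Bv (x t : L) : C2 L := Ab (qmk a) (qmk x) (qmk t) * Ab (qmk x) (qmk t) (qmk b)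

lemma Bv_mul_left (x y t : L) : Bv a b (x * y) t = Bv a b x t * Bv a b y t := by
  unfold Bv
  rw [show qmk (x * y) = qmk x + qmk y from rfl, Ab_L2, Ab_L1]
  simp only [mul_comm, mul_left_comm, mul_assoc]

lemma Bv_sym (x t : L) : Bv a b x t = Bv a b t x := by
  unfold Bv
  rw [Ab_T23 (qmk a) (qmk x) (qmk t), Ab_T12 (qmk x) (qmk t) (qmk b)]

lemma Bv_self (x : L) : Bv a b x x = 1 := by
  unfold Bv
  rw [Ab_altR, Ab_altL, _root_.mul_one]

lemma qmk_central {z : L} (hz : inCenter z) (x : L) : qmk (x * z) = qmk x :=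
  (Quotient.sound ⟨z, hz, rfl⟩ : qmk x = qmk (x * z)).symm

lemma Bv_central (x t : L) {z : L} (hz : inCenter z) : Bv a b (x * z) t = Bv a b x t := by
  unfold Bv
  rw [qmk_central hz x]

def βf : L → (L → C2 L) := fun x t => Bv a b x t

lemma βf_mul (x y : L) : βf a b (x * y) = βf a b x * βf a b y :=
  funext fun t => Bv_mul_left a b x y t

lemma βf_one : βf a b 1 = 1 := by
  funext t
  show Bv a b 1 t = 1
  unfold Bv
  rw [show qmk (1 : L) = 0 from rfl, Ab_one2, Ab_one1, _root_.mul_one]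

lemma pi_sq (f : L → C2 L) : f * f = 1 := funext fun t => c2_sq (f t)

def Vsub : Subgroup (L → C2 L) where
  carrier := Set.range (βf a b)
  mul_mem' := by
    rintro _ _ ⟨x, rfl⟩ ⟨y, rfl⟩
    exact ⟨x * y, βf_mul a b x y⟩
  one_mem' := ⟨1, βf_one a b⟩
  inv_mem' := by
    rintro f ⟨x, rfl⟩
    rw [inv_eq_of_mul_eq_one_right (pi_sq (βf a b x))]
    exact ⟨x, rfl⟩

open Classical in
noncomputable def pick (g : L → C2 L) : L := if h : ∃ x, βf a b x = g then h.choose else 1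

lemma pick_spec {g : L → C2 L} (hg : g ∈ Set.range (βf a b)) : βf a b (pick a b g) = g := by
  have h' : ∃ x, βf a b x = g := hg
  unfold pick
  rw [dif_pos h']
  exact h'.choose_spec

noncomputable def bp (f g : L → C2 L) : C2 L := f (pick a b g)

lemma bp_eval (x : L) {g : L → C2 L} (hg : g ∈ Set.range (βf a b)) :
    bp a b (βf a b x) g = g x := by
  have hy : βf a b (pick a b g) = g := pick_spec a b hg
  show Bv a b x (pick a b g) = g x
  rw [Bv_sym]
  exact congrFun hy x

lemma bp_left (f g h : L → C2 L) : bp a b (f * g) h = bp a b f h * bp a b g h := rfl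

lemma bp_right {f g h : L → C2 L} (hf : f ∈ Set.range (βf a b))
    (hg : g ∈ Set.range (βf a b)) (hh : h ∈ Set.range (βf a b)) :
    bp a b f (g * h) = bp a b f g * bp a b f h := by
  obtain ⟨x, rfl⟩ := hf
  obtain ⟨u, rfl⟩ := hg
  obtain ⟨v, rfl⟩ := hh
  rw [bp_eval a b x ⟨u, rfl⟩, bp_eval a b x ⟨v, rfl⟩,
    show βf a b u * βf a b v = βf a b (u * v) from (βf_mul a b u v).symm,
    bp_eval a b x ⟨u * v, rfl⟩]
  exact congrFun (βf_mul a b u v) x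

lemma bp_comm {f g : L → C2 L} (hf : f ∈ Set.range (βf a b))
    (hg : g ∈ Set.range (βf a b)) : bp a b f g = bp a b g f := by
  obtain ⟨x, rfl⟩ := hf
  obtain ⟨y, rfl⟩ := hg
  rw [bp_eval a b x ⟨y, rfl⟩, bp_eval a b y ⟨x, rfl⟩]
  exact Bv_sym a b y x

lemma bp_self {f : L → C2 L} (hf : f ∈ Set.range (βf a b)) : bp a b f f = 1 := by
  obtain ⟨x, rfl⟩ := hf
  rw [bp_eval a b x ⟨x, rfl⟩]
  exact Bv_self a b x

lemma bp_one_left (g : L → C2 L) : bp a b 1 g = 1 := rfl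

/-! ### the twisted product group -/

abbrev VT := ↥(Vsub a b)

lemma vt_mem (v : VT a b) : (v : L → C2 L) ∈ Set.range (βf a b) := v.2

lemma vt_sq (v : VT a b) : v * v = 1 := Subtype.ext (pi_sq (v : L → C2 L))

noncomputable def bpV (v w : VT a b) : C2 L := bp a b (v : L → C2 L) (w : L → C2 L)

def Et := VT a b × C2 L

noncomputable instance : CommGroup (Et a b) where
  mul p q := (p.1 * q.1, (p.2 * q.2) * bpV a b p.1 q.1)
  one := (1, 1)
  inv p := p
  mul_assoc p q r := by
    refine Prod.ext (mul_assoc _ _ _) ?_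
    show ((p.2 * q.2) * bpV a b p.1 q.1 * r.2) * bpV a b (p.1 * q.1) r.1
        = (p.2 * (q.2 * r.2 * bpV a b q.1 r.1)) * bpV a b p.1 (q.1 * r.1)
    rw [show bpV a b (p.1 * q.1) r.1 = bpV a b p.1 r.1 * bpV a b q.1 r.1 from
        bp_left a b _ _ _,
      show bpV a b p.1 (q.1 * r.1) = bpV a b p.1 q.1 * bpV a b p.1 r.1 from
        bp_right a b (vt_mem a b p.1) (vt_mem a b q.1) (vt_mem a b r.1)]
    simp only [mul_comm, mul_left_comm, mul_assoc]
  one_mul p := by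
    refine Prod.ext (_root_.one_mul _) ?_
    show ((1 : C2 L) * p.2) * bp a b 1 (p.1 : L → C2 L) = p.2
    rw [bp_one_left, _root_.mul_one, _root_.one_mul]
  mul_one p := by
    refine Prod.ext (_root_.mul_one _) ?_
    show (p.2 * 1) * bpV a b p.1 1 = p.2
    have h1 : bpV a b p.1 1 = 1 := by
      obtain ⟨x, hx⟩ := vt_mem a b p.1
      show bp a b (p.1 : L → C2 L) ((1 : VT a b) : L → C2 L) = 1
      rw [show ((1 : VT a b) : L → C2 L) = (1 : L → C2 L) from rfl, ← hx,
        bp_eval a b x ⟨1, βf_one a b⟩]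
      rfl
    rw [h1, _root_.mul_one, _root_.mul_one]
  inv_mul_cancel p := by
    refine Prod.ext ?_ ?_
    · exact vt_sq a b p.1
    · show (p.2 * p.2) * bpV a b p.1 p.1 = 1
      unfold bpV
      rw [c2_sq, bp_self a b (vt_mem a b p.1), _root_.mul_one]
  mul_comm p q := by
    refine Prod.ext (mul_comm _ _) ?_
    show (p.2 * q.2) * bpV a b p.1 q.1 = (q.2 * p.2) * bpV a b q.1 p.1
    unfold bpV
    rw [mul_comm p.2 q.2, bp_comm a b (vt_mem a b p.1) (vt_mem a b q.1)]

end AB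

/-! ### splitting the twisted extension: the map μ -/

section MU

variable (a b : L)

lemma et_mul_fst (p q : Et a b) : (p * q).1 = p.1 * q.1 := rfl
lemma et_mul_snd (p q : Et a b) : (p * q).2 = (p.2 * q.2) * bpV a b p.1 q.1 := rfl

lemma et_sq (p : Et a b) : p * p = 1 := by
  refine Prod.ext ?_ ?_
  · exact vt_sq a b p.1
  · show (p.2 * p.2) * bpV a b p.1 p.1 = 1
    unfold bpV
    rw [c2_sq, bp_self a b (vt_mem a b p.1), _root_.mul_one]

/-- the first projection as a monoid hom -/
def πE : Et a b →* VT a b where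
  toFun p := p.1
  map_one' := rfl
  map_mul' _ _ := rfl

lemma zmod2_cases : ∀ c : ZMod 2, c = 0 ∨ c = 1 := by decide

lemma mu_exists : ∃ m : VT a b → C2 L,
    ∀ v w, m (v * w) = (m v * m w) * bpV a b v w := by
  haveI : Fact (Nat.Prime 2) := ⟨by norm_num⟩
  letI mV : Module (ZMod 2) (Additive (VT a b)) :=
    AddCommGroup.zmodModule (by
      intro x
      rw [two_nsmul]
      exact vt_sq a b x)
  letI mE : Module (ZMod 2) (Additive (Et a b)) :=
    AddCommGroup.zmodModule (by
      intro x
      rw [two_nsmul]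
      exact et_sq a b x)
  let π' : Additive (Et a b) →+ Additive (VT a b) := MonoidHom.toAdditive (πE a b)
  let ℓ : Additive (Et a b) →ₗ[ZMod 2] Additive (VT a b) :=
    { toFun := π'
      map_add' := π'.map_add
      map_smul' := by
        intro c x
        show π' (c • x) = (RingHom.id (ZMod 2)) c • π' x
        simp only [RingHom.id_apply]
        rcases zmod2_cases c with h | h <;> subst h
        · rw [zero_smul, zero_smul, map_zero]
        · rw [one_smul, one_smul] }
  have hsurj : LinearMap.range ℓ = ⊤ := by
    rw [LinearMap.range_eq_top]
    intro v
    exact ⟨(Additive.toMul v, 1), rfl⟩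
  obtain ⟨σ, hσ⟩ := LinearMap.exists_rightInverse_of_surjective ℓ hsurj
  set s : VT a b → Et a b := fun v => Additive.toMul (σ (Additive.ofMul v)) with hs
  have hfst : ∀ v, (s v).1 = v := by
    intro v
    have := DFunLike.congr_fun hσ (Additive.ofMul v)
    exact this
  refine ⟨fun v => (s v).2, fun v w => ?_⟩
  have hmul : s (v * w) = s v * s w := by
    rw [hs]
    show Additive.toMul (σ (Additive.ofMul (v * w))) = _
    rw [show Additive.ofMul (v * w) = Additive.ofMul v + Additive.ofMul w from rfl,
      map_add]
    rfl
  have h2 := congrArg Prod.snd hmul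
  rw [et_mul_snd] at h2
  rw [hfst v, hfst w] at h2
  exact h2

end MU

/-! ### the main construction -/

section FINAL

variable (a b : L)

noncomputable def vmk (x : L) : VT a b := ⟨βf a b x, ⟨x, rfl⟩⟩

lemma vmk_mul (x y : L) : vmk a b (x * y) = vmk a b x * vmk a b y :=
  Subtype.ext (βf_mul a b x y)

lemma bpV_vmk (x y : L) : bpV a b (vmk a b x) (vmk a b y) = Bv a b x y := by
  show bp a b (βf a b x) (βf a b y) = _
  rw [bp_eval a b x ⟨y, rfl⟩]
  exact Bv_sym a b y x

lemma abRaw_split1 (x y : L) :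
    abRaw (a * x) y b = abRaw a y b * abRaw x y b := by
  have h := Ab_L1 (qmk a) (qmk x) (qmk y) (qmk b)
  rw [show qmk a + qmk x = qmk (a * x) from rfl] at h
  exact h

lemma main_iso : ∃ g : L → L, Function.Bijective g ∧
    ∀ x y : L, g (x * y) = (g x * b⁻¹) * (a⁻¹ * g y) := by
  obtain ⟨m, hm⟩ := mu_exists a b
  set μ : L → C2 L := fun x => m (vmk a b x) with hμ
  have μ_mul : ∀ x y : L, μ (x * y) = (μ x * μ y) * Bv a b x y := by
    intro x y
    show m (vmk a b (x * y)) = _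
    rw [vmk_mul, hm, bpV_vmk]
  have μ_ctr : ∀ (x z : L), inCenter z → μ (x * z) = μ x := by
    intro x z hz
    have hv : vmk a b (x * z) = vmk a b x :=
      Subtype.ext (funext fun t => Bv_central a b x t hz)
    show m (vmk a b (x * z)) = m (vmk a b x)
    rw [hv]
  have hμc : ∀ x, inCenter (μ x).1 := fun x => (μ x).2.1
  have hμs : ∀ x, (μ x).1 * (μ x).1 = 1 := fun x => (μ x).2.2
  refine ⟨fun x => ((a * x) * b) * (μ x).1, ⟨?_, ?_⟩, ?_⟩
  · -- injective
    intro x y hxy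
    simp only at hxy
    have h2 := congrArg (· * (μ x).1) hxy
    rw [ctr_a3 (hμc x) ((a*x)*b) _, hμs x, lmul_one,
      ctr_a3 (hμc x) ((a*y)*b) _] at h2
    set c := (μ y).1 * (μ x).1 with hc
    have hcc : inCenter c := inCenter_mul (hμc y) (hμc x)
    rw [← sl_left hcc (a*y) b, ctr_a3 hcc a y] at h2
    have h3 := lmul_left_cancel (lmul_right_cancel h2)
    -- h3 : x = y * c
    have h4 : (μ x).1 = (μ y).1 := by rw [h3, μ_ctr y c hcc]
    have h5 : c = 1 := by rw [hc, ← h4, hμs]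
    rw [h3, h5, lmul_one]
  · -- surjective
    intro w
    set x0 := a⁻¹ * (w * b⁻¹) with hx0
    refine ⟨x0 * (μ x0).1, ?_⟩
    simp only
    rw [μ_ctr x0 (μ x0).1 (hμc x0)]
    rw [sl_right (hμc x0) a x0, sl_left (hμc x0) (a * x0) b,
      ctr_a3 (hμc x0) ((a*x0)*b) _, hμs x0, lmul_one, hx0,
      lmul_inv_cancel_left, linv_mul_cancel_right]
  · -- the homomorphism equation
    intro x y
    simp only
    have s1 : (((a * x) * b) * (μ x).1) * b⁻¹ = (a * x) * (μ x).1 := by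
      rw [sl_left (hμc x) ((a*x)*b) b⁻¹, lmul_inv_cancel_right]
    have s2 : a⁻¹ * (((a * y) * b) * (μ y).1)
        = ((y * b) * IPLoop.assoc a y b) * (μ y).1 := by
      rw [assocEq a y b, sl_right (hμc y) a⁻¹ _, sl_right (hactr a y b) a⁻¹ _,
        linv_mul_cancel_left]
    have s3 : ((a * x) * (μ x).1) * (((y * b) * IPLoop.assoc a y b) * (μ y).1)
        = ((a * x) * (y * b)) * ((μ x).1 * (IPLoop.assoc a y b * (μ y).1)) := by
      rw [ctr_a3 (hμc y) (y * b) (IPLoop.assoc a y b),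
        slide_mul_mul (hμc x) (inCenter_mul (hactr a y b) (hμc y)) (a * x) (y * b)]
    have hP : inCenter ((μ x).1 * (IPLoop.assoc a y b * (μ y).1)) :=
      inCenter_mul (hμc x) (inCenter_mul (hactr a y b) (hμc y))
    have c2eq : μ (x * y) * abRaw (a * x) y b
        = abRaw a x y * (μ x * (abRaw a y b * μ y)) := by
      rw [μ_mul x y, abRaw_split1 a b x y,
        show Bv a b x y = abRaw a x y * abRaw x y b from rfl]
      simp only [mul_comm, mul_left_comm, mul_assoc, c2_sq, c2_cancel,
        _root_.one_mul, _root_.mul_one]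
    have s4 : (μ (x * y)).1 * IPLoop.assoc (a * x) y b
        = IPLoop.assoc a x y * ((μ x).1 * (IPLoop.assoc a y b * (μ y).1)) :=
      congrArg Subtype.val c2eq
    have Estar : ((a * x) * (y * b)) * IPLoop.assoc (a * x) y b
        = ((a * (x * y)) * b) * IPLoop.assoc a x y := by
      calc ((a * x) * (y * b)) * IPLoop.assoc (a * x) y b
          = ((a * x) * y) * b := (assocEq (a * x) y b).symm
        _ = ((a * (x * y)) * IPLoop.assoc a x y) * b := by rw [assocEq a x y]
        _ = ((a * (x * y)) * b) * IPLoop.assoc a x y := sl_left (hactr a x y) _ _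
    apply lmul_right_cancel (a := IPLoop.assoc (a * x) y b)
    calc (((a * (x * y)) * b) * (μ (x * y)).1) * IPLoop.assoc (a * x) y b
        = ((a * (x * y)) * b) * ((μ (x * y)).1 * IPLoop.assoc (a * x) y b) :=
          ctr_a3 (hactr (a * x) y b) _ _
      _ = ((a * (x * y)) * b) *
            (IPLoop.assoc a x y * ((μ x).1 * (IPLoop.assoc a y b * (μ y).1))) := by
          rw [s4]
      _ = (((a * (x * y)) * b) * IPLoop.assoc a x y) *
            ((μ x).1 * (IPLoop.assoc a y b * (μ y).1)) := (ctr_a3 hP _ _).symm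
      _ = (((a * x) * (y * b)) * IPLoop.assoc (a * x) y b) *
            ((μ x).1 * (IPLoop.assoc a y b * (μ y).1)) := by rw [Estar]
      _ = ((((a * x) * (y * b)) * ((μ x).1 * (IPLoop.assoc a y b * (μ y).1))) *
            IPLoop.assoc (a * x) y b) := by rw [sl_left (hactr (a * x) y b)]
      _ = (((((a * x) * b) * (μ x).1) * b⁻¹) * (a⁻¹ * (((a * y) * b) * (μ y).1))) *
            IPLoop.assoc (a * x) y b := by rw [s1, s2, s3]

end FINAL

end Stmt9

open IPLoop in
/-- A Moufang loop of class at most 2 all of whose associators square to 1 is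
a G-loop: every loop isotope of it is isomorphic to it. -/
theorem stmt9 {L : Type*} [IPLoop L] (hM : IsMoufang L) (h2 : ClassTwo L)
    (hsq : ∀ x y z : L, assoc x y z ^ (2 : ℕ) = 1)
    {M : Type*} [Loop M] (U V W : L → M)
    (hU : Function.Bijective U) (hV : Function.Bijective V)
    (hW : Function.Bijective W)
    (hiso : ∀ x y : L, U x * V y = W (x * y)) :
    ∃ f : L → M, Function.Bijective f ∧ ∀ x y : L, f (x * y) = f x * f y := by
  obtain ⟨rr, hrr⟩ := hU.surjective 1
  obtain ⟨ss, hss⟩ := hV.surjective 1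
  have hUW : ∀ x : L, U x = W (x * ss) := fun x => by
    rw [← hiso x ss, hss, Loop.mul_one]
  have hVW : ∀ y : L, V y = W (rr * y) := fun y => by
    rw [← hiso rr y, hrr, Loop.one_mul]
  have hWW : ∀ p q : L, W p * W q = W ((p * ss⁻¹) * (rr⁻¹ * q)) := by
    intro p q
    have h1 : W p = U (p * ss⁻¹) := by rw [hUW, Stmt9.linv_mul_cancel_right]
    have h2 : W q = V (rr⁻¹ * q) := by rw [hVW, Stmt9.lmul_inv_cancel_left]
    rw [h1, h2, hiso]
  letI : MoufC2 L :=
    { mouf := hM, cls2 := h2,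
      asq := fun x y z => by
        have h := hsq x y z
        have h2 : IPLoop.assoc x y z ^ (2 : ℕ)
            = IPLoop.assoc x y z * (IPLoop.assoc x y z * 1) := rfl
        rw [h2, IPLoop.mul_one] at h
        exact h }
  obtain ⟨g, hgbij, hgeq⟩ := Stmt9.main_iso rr ss
  exact ⟨fun x => W (g x), hW.comp hgbij,
    fun x y => (congrArg W (hgeq x y)).trans (hWW (g x) (g y)).symm⟩
end

section
/- Let C ⊆ F₂ⁿ be a doubly even binary code, and define σ(c) ≡ wt(c)/4 (mod 2), χ(c,d) ≡ wt(c∩d)/2 (mod 2), α(c,d,e) ≡ wt(c∩d∩e) (mod 2) for c, d, e ∈ C, with values in Z = ℤ/2ℤ. Then (C,σ,χ,α) is a coded vector space over F₂: writing Z additively, for all c, d, e, f ∈ C one has χ(c,c) = 0; χ(c,d) = χ(d,c); α(c,d,d) = α(d,c,d) = α(d,d,c) = 0; α is symmetric in its arguments; σ(c+d) = σ(c) + σ(d) + χ(c,d); χ(c+d,e) = χ(c,e) + χ(d,e) + α(c,d,e); and α(c+d,e,f) = α(c,e,f) + α(d,e,f). -/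
/-! Over `F₂` the support of `c + d` is the symmetric difference of the supports of `c` and `d`,
so `wt (c + d) + 2 wt (c ∩ d) = wt c + wt d`, and likewise after intersecting with any fixed set
of coordinates. In a doubly even code this identity forces `wt (c ∩ d)` to be even; dividing it
by 4 (for weights) or by 2 (for pairwise intersections) and reducing mod 2 gives the addition
formulas. The symmetries are identities between the underlying sets, and `α(c,d,d) = 0` because
`c ∩ d ∩ d = c ∩ d`. -/

/-- The Hamming weight of a binary vector. -/
def wt {n : ℕ} (c : Fin n → ZMod 2) : ℕ :=
  (Finset.univ.filter fun i => c i ≠ 0).card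

/-- The number of coordinates where both vectors are nonzero. -/
def wt2 {n : ℕ} (c d : Fin n → ZMod 2) : ℕ :=
  (Finset.univ.filter fun i => c i ≠ 0 ∧ d i ≠ 0).card

/-- The number of coordinates where all three vectors are nonzero. -/
def wt3 {n : ℕ} (c d e : Fin n → ZMod 2) : ℕ :=
  (Finset.univ.filter fun i => c i ≠ 0 ∧ d i ≠ 0 ∧ e i ≠ 0).card

open Finset

lemma ZMod.two_ite_add_ne_zero (x y : ZMod 2) :
    (if x + y ≠ 0 then 1 else 0) + 2 * (if x ≠ 0 ∧ y ≠ 0 then 1 else 0)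
      = (if x ≠ 0 then 1 else 0) + (if y ≠ 0 then 1 else 0) := by
  revert x y; decide

lemma card_filter_add_ne_zero {ι : Type*} [Fintype ι] (P : ι → Prop) [DecidablePred P]
    (c d : ι → ZMod 2) :
    #{i | (c + d) i ≠ 0 ∧ P i} + 2 * #{i | (c i ≠ 0 ∧ d i ≠ 0) ∧ P i}
      = #{i | c i ≠ 0 ∧ P i} + #{i | d i ≠ 0 ∧ P i} := by
  simp only [card_filter, mul_sum, ← sum_add_distrib]
  refine sum_congr rfl fun i _ => ?_
  by_cases hP : P i
  · simpa only [hP, and_true, Pi.add_apply] using ZMod.two_ite_add_ne_zero (c i) (d i)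
  · simp [hP]

lemma wt_add {n : ℕ} (c d : Fin n → ZMod 2) : wt (c + d) + 2 * wt2 c d = wt c + wt d := by
  simpa [wt, wt2] using card_filter_add_ne_zero (fun _ => True) c d

lemma wt2_add_left {n : ℕ} (c d e : Fin n → ZMod 2) :
    wt2 (c + d) e + 2 * wt3 c d e = wt2 c e + wt2 d e := by
  simpa [wt2, wt3, and_assoc] using card_filter_add_ne_zero (fun i => e i ≠ 0) c d

lemma natCast_wt3_add_left {n : ℕ} (c d e f : Fin n → ZMod 2) :
    ((wt3 (c + d) e f : ℕ) : ZMod 2) = (wt3 c e f : ℕ) + (wt3 d e f : ℕ) := by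
  have h := card_filter_add_ne_zero (fun i => e i ≠ 0 ∧ f i ≠ 0) c d
  rw [← Nat.cast_add, ZMod.natCast_eq_natCast_iff']
  simp only [wt3]
  omega

lemma wt2_self {n : ℕ} (c : Fin n → ZMod 2) : wt2 c c = wt c := by
  simp [wt, wt2]

lemma wt2_comm {n : ℕ} (c d : Fin n → ZMod 2) : wt2 c d = wt2 d c := by
  simp only [wt2, and_comm]

lemma wt3_comm {n : ℕ} (c d e : Fin n → ZMod 2) : wt3 c d e = wt3 d c e := by
  simp only [wt3, and_left_comm]

lemma wt3_rotate {n : ℕ} (c d e : Fin n → ZMod 2) : wt3 c d e = wt3 d e c := by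
  simp only [wt3, and_left_comm, and_comm]

lemma wt3_self_right {n : ℕ} (c d : Fin n → ZMod 2) : wt3 c d d = wt2 c d := by
  simp only [wt2, wt3, and_self]

lemma ZMod.two_natCast_div_eq_of_add_mul_eq {p a b c k : ℕ} (hp : 0 < p)
    (h : a + p * k = b + c) (ha : p ∣ a) (hb : p ∣ b) (hc : p ∣ c) :
    ((a / p : ℕ) : ZMod 2) = (b / p : ℕ) + (c / p : ℕ) + k := by
  obtain ⟨a, rfl⟩ := ha
  obtain ⟨b, rfl⟩ := hb
  obtain ⟨c, rfl⟩ := hc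
  have hquot : a + k = b + c := by
    apply Nat.eq_of_mul_eq_mul_left hp
    linarith
  have hcast : (a : ZMod 2) + k = b + c := by simpa using congrArg (Nat.cast : ℕ → ZMod 2) hquot
  have h2 : (2 : ZMod 2) = 0 := rfl
  simp only [Nat.mul_div_cancel_left _ hp]
  linear_combination hcast - (k : ZMod 2) * h2

section DoublyEven

variable {n : ℕ} {V : Submodule (ZMod 2) (Fin n → ZMod 2)}

lemma two_dvd_wt2_of_doublyEven (hV : ∀ c ∈ V, wt c % 4 = 0) {c d : Fin n → ZMod 2}
    (hc : c ∈ V) (hd : d ∈ V) : 2 ∣ wt2 c d := by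
  have := wt_add c d
  have := hV c hc
  have := hV d hd
  have := hV _ (V.add_mem hc hd)
  omega

lemma natCast_wt_add_div_four (hV : ∀ c ∈ V, wt c % 4 = 0) {c d : Fin n → ZMod 2}
    (hc : c ∈ V) (hd : d ∈ V) :
    ((wt (c + d) / 4 : ℕ) : ZMod 2)
      = ((wt c / 4 : ℕ) : ZMod 2) + ((wt d / 4 : ℕ) : ZMod 2) + ((wt2 c d / 2 : ℕ) : ZMod 2) := by
  have h := wt_add c d
  have := two_dvd_wt2_of_doublyEven hV hc hd
  refine ZMod.two_natCast_div_eq_of_add_mul_eq (by norm_num) (by omega)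
    (Nat.dvd_of_mod_eq_zero (hV _ (V.add_mem hc hd)))
    (Nat.dvd_of_mod_eq_zero (hV c hc)) (Nat.dvd_of_mod_eq_zero (hV d hd))

lemma natCast_wt2_add_left_div_two (hV : ∀ c ∈ V, wt c % 4 = 0) {c d e : Fin n → ZMod 2}
    (hc : c ∈ V) (hd : d ∈ V) (he : e ∈ V) :
    ((wt2 (c + d) e / 2 : ℕ) : ZMod 2)
      = ((wt2 c e / 2 : ℕ) : ZMod 2) + ((wt2 d e / 2 : ℕ) : ZMod 2) + ((wt3 c d e : ℕ) : ZMod 2) :=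
  ZMod.two_natCast_div_eq_of_add_mul_eq (by norm_num) (wt2_add_left c d e)
    (two_dvd_wt2_of_doublyEven hV (V.add_mem hc hd) he)
    (two_dvd_wt2_of_doublyEven hV hc he) (two_dvd_wt2_of_doublyEven hV hd he)

end DoublyEven

/-- A doubly even binary code `C ⊆ F₂ⁿ`, with `σ(c) = wt(c)/4 (mod 2)`,
`χ(c,d) = wt(c∩d)/2 (mod 2)`, `α(c,d,e) = wt(c∩d∩e) (mod 2)`, is a coded
vector space over `F₂` (written additively). -/
theorem stmt14 {n : ℕ} (V : Submodule (ZMod 2) (Fin n → ZMod 2))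
    (hV : ∀ c ∈ V, wt c % 4 = 0) :
    ∀ c ∈ V, ∀ d ∈ V, ∀ e ∈ V, ∀ f ∈ V,
      ((wt2 c c / 2 : ℕ) : ZMod 2) = 0 ∧
      ((wt2 c d / 2 : ℕ) : ZMod 2) = ((wt2 d c / 2 : ℕ) : ZMod 2) ∧
      ((wt3 c d d : ℕ) : ZMod 2) = 0 ∧
      ((wt3 d c d : ℕ) : ZMod 2) = 0 ∧
      ((wt3 d d c : ℕ) : ZMod 2) = 0 ∧
      ((wt3 c d e : ℕ) : ZMod 2) = ((wt3 d c e : ℕ) : ZMod 2) ∧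
      ((wt3 c d e : ℕ) : ZMod 2) = ((wt3 d e c : ℕ) : ZMod 2) ∧
      ((wt (c + d) / 4 : ℕ) : ZMod 2)
        = ((wt c / 4 : ℕ) : ZMod 2) + ((wt d / 4 : ℕ) : ZMod 2)
          + ((wt2 c d / 2 : ℕ) : ZMod 2) ∧
      ((wt2 (c + d) e / 2 : ℕ) : ZMod 2)
        = ((wt2 c e / 2 : ℕ) : ZMod 2) + ((wt2 d e / 2 : ℕ) : ZMod 2)
          + ((wt3 c d e : ℕ) : ZMod 2) ∧
      ((wt3 (c + d) e f : ℕ) : ZMod 2)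
        = ((wt3 c e f : ℕ) : ZMod 2) + ((wt3 d e f : ℕ) : ZMod 2) := by
  intro c hc d hd e he f _
  have hcd : ((wt3 c d d : ℕ) : ZMod 2) = 0 := by
    rw [wt3_self_right, ZMod.natCast_eq_zero_iff]
    exact two_dvd_wt2_of_doublyEven hV hc hd
  refine ⟨?_, by rw [wt2_comm], hcd, by rwa [wt3_comm], by rwa [wt3_rotate, wt3_comm],
    by rw [wt3_comm], by rw [wt3_rotate], natCast_wt_add_div_four hV hc hd,
    natCast_wt2_add_left_div_two hV hc hd he, natCast_wt3_add_left c d e f⟩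
  rw [wt2_self, ZMod.natCast_eq_zero_iff]
  have := hV c hc
  omega
end
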